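/- arXiv:2401.07050 — 12 statements merged into one kernel-verified Lean document; each statement's English description precedes it below -/
import Mathlib

section
/- Let (X, <, R) be a countable homogeneous ordered bipartite graph. Then, viewed just as a 2-coloured linear order, (X, <) together with the red/blue colouring is isomorphic to one of the following: (i) a singleton of either colour, or a two-element set with one red and one blue point; (ii) a countable dense linear order without endpoints (a copy of ℚ) monochromatically coloured red or blue; (iii) a copy of ℚ coloured by one colour together with a single point of the other colour adjoined as a greatest element or as a least element; (iv) a copy 2·ℚ consisting of a copy of ℚ of one colour followed entirely by a copy of ℚ of the other colour; (v) ℚ·2, a dense family of adjacent pairs in which each point has an immediate successor of the other colour, every pair coloured (red, blue), or every pair coloured (blue, red); (vi) the generic 2-coloured linear order ℚ₂, i.e., a countable dense linear order without endpoints in which both the red points and the blue points are dense. -/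
/-- A map `f` defined on the finite set `s` is a partial isomorphism of the structure
`(X, lt, red, R)`: it preserves the order `lt`, the colours `red`, and the graph
relation `R` together with its negation. -/
def IsPartialIso {X : Type*} (lt : X → X → Prop) (red : X → Bool) (R : X → X → Prop)
    (s : Finset X) (f : X → X) : Prop :=
  (∀ x ∈ s, ∀ y ∈ s, (lt x y ↔ lt (f x) (f y))) ∧
  (∀ x ∈ s, red (f x) = red x) ∧
  (∀ x ∈ s, ∀ y ∈ s, (R x y ↔ R (f x) (f y)))

/-- `g` is an automorphism of the structure `(X, lt, red, R)`. -/
def IsAuto {X : Type*} (lt : X → X → Prop) (red : X → Bool) (R : X → X → Prop)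
    (g : X ≃ X) : Prop :=
  (∀ x y, lt x y ↔ lt (g x) (g y)) ∧ (∀ x, red (g x) = red x) ∧
  (∀ x y, R x y ↔ R (g x) (g y))

/-- The structure `(X, lt, red, R)` is homogeneous: every isomorphism between finite
substructures extends to an automorphism. -/
def Homogeneous {X : Type*} (lt : X → X → Prop) (red : X → Bool) (R : X → X → Prop) : Prop :=
  ∀ (s : Finset X) (f : X → X), IsPartialIso lt red R s f →
    ∃ g : X ≃ X, IsAuto lt red R g ∧ ∀ x ∈ s, g x = f x

private lemma bool_ne_iff : ∀ u v : Bool, u ≠ v ↔ u = !v := by decide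

private lemma bool_eq_of_ne_ne : ∀ u v w : Bool, u ≠ w → v ≠ w → u = v := by decide

private lemma pt_trans {X : Type*} [LinearOrder X] {red : X → Bool} {R : X → X → Prop}
    (hIrr : ∀ x, ¬ R x x)
    (hHom : Homogeneous (· < · : X → X → Prop) red R)
    {a b : X} (hc : red a = red b) :
    ∃ g : X ≃ X, IsAuto (· < · : X → X → Prop) red R g ∧ g a = b := by
  obtain ⟨g, hg, hfix⟩ := hHom {a} (fun _ => b)
    ⟨fun x hx y hy => by
        rw [Finset.mem_singleton] at hx hy; rw [hx, hy]
        exact iff_of_false (lt_irrefl a) (lt_irrefl b),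
     fun x hx => by rw [Finset.mem_singleton] at hx; rw [hx]; exact hc.symm,
     fun x hx y hy => by
        rw [Finset.mem_singleton] at hx hy; rw [hx, hy]
        exact iff_of_false (hIrr a) (hIrr b)⟩
  exact ⟨g, hg, hfix a (Finset.mem_singleton_self a)⟩

private lemma pair_trans {X : Type*} [LinearOrder X] {red : X → Bool} {R : X → X → Prop}
    (hSymm : ∀ x y, R x y → R y x) (hIrr : ∀ x, ¬ R x x)
    (hHom : Homogeneous (· < · : X → X → Prop) red R)
    {a b a' b' : X} (hab : a < b) (hab' : a' < b')
    (hra : red a' = red a) (hrb : red b' = red b) (hR : R a b ↔ R a' b') :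
    ∃ g : X ≃ X, IsAuto (· < · : X → X → Prop) red R g ∧ g a = a' ∧ g b = b' := by
  classical
  set f : X → X := fun z => if z = a then a' else b' with hf
  have hfa : f a = a' := if_pos rfl
  have hfb : f b = b' := if_neg hab.ne'
  have hmem : ∀ x ∈ ({a, b} : Finset X), x = a ∨ x = b := by
    intro x hx; simpa [Finset.mem_insert, Finset.mem_singleton] using hx
  have hpi : IsPartialIso (· < · : X → X → Prop) red R {a, b} f := by
    refine ⟨?_, ?_, ?_⟩
    · intro x hx y hy
      rcases hmem x hx with h | h <;> rcases hmem y hy with h' | h' <;>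
        rw [h, h'] <;> simp only [hfa, hfb]
      · exact iff_of_false (lt_irrefl _) (lt_irrefl _)
      · exact iff_of_true hab hab'
      · exact iff_of_false (not_lt.2 hab.le) (not_lt.2 hab'.le)
      · exact iff_of_false (lt_irrefl _) (lt_irrefl _)
    · intro x hx
      rcases hmem x hx with h | h <;> rw [h]
      · rw [hfa]; exact hra
      · rw [hfb]; exact hrb
    · intro x hx y hy
      rcases hmem x hx with h | h <;> rcases hmem y hy with h' | h' <;>
        rw [h, h'] <;> simp only [hfa, hfb]
      · exact iff_of_false (hIrr _) (hIrr _)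
      · exact hR
      · exact ⟨fun h => hSymm _ _ (hR.1 (hSymm _ _ h)), fun h => hSymm _ _ (hR.2 (hSymm _ _ h))⟩
      · exact iff_of_false (hIrr _) (hIrr _)
  obtain ⟨g, hg, hfix⟩ := hHom {a, b} f hpi
  exact ⟨g, hg, by rw [hfix a (by simp), hfa], by rw [hfix b (by simp), hfb]⟩

/-- Lemma 2.1: a countable homogeneous ordered bipartite graph, viewed as a 2-coloured
linear order, is (up to isomorphism) one of the cases (i)-(vi).  Each case is expressed
by an intrinsic property characterizing the corresponding coloured order among countable
coloured linear orders:
(i) a singleton, or a doubleton with one red and one blue point;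
(ii) a monochromatic copy of ℚ (countable dense linear order without endpoints);
(iii) a copy of ℚ of one colour with a single point of the other colour adjoined as
      greatest or least element;
(iv) a copy of ℚ of one colour entirely followed by a copy of ℚ of the other colour;
(v) ℚ·2: every point of one colour has an immediate successor of the other colour,
      every point of the other colour has an immediate predecessor of the first colour,
      with the lower colour class a copy of ℚ;
(vi) the generic 2-coloured order ℚ₂: no endpoints and both colours dense. -/
theorem stmt0 {X : Type*} [LinearOrder X] [Countable X] [Nonempty X]
    (red : X → Bool) (R : X → X → Prop)
    (hSymm : ∀ x y, R x y → R y x) (hIrr : ∀ x, ¬ R x x)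
    (hBip : ∀ x y, R x y → red x ≠ red y)
    (hHom : Homogeneous (· < · : X → X → Prop) red R) :
    -- (i)
    ((∃ x : X, ∀ y, y = x) ∨ (∃ x y : X, red x ≠ red y ∧ ∀ z, z = x ∨ z = y)) ∨
    -- (ii)
    (((∀ x, red x = true) ∨ (∀ x, red x = false)) ∧
      DenselyOrdered X ∧ NoMinOrder X ∧ NoMaxOrder X) ∨
    -- (iii)
    (∃ z : X, (∀ x, red x = red z → x = z) ∧ ((∀ x, x ≤ z) ∨ (∀ x, z ≤ x)) ∧
      Nonempty ({x : X // red x ≠ red z} ≃o ℚ)) ∨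
    -- (iv)
    (((∀ x y, red x = true → red y = false → x < y) ∨
      (∀ x y, red x = false → red y = true → x < y)) ∧
      Nonempty ({x : X // red x = true} ≃o ℚ) ∧
      Nonempty ({x : X // red x = false} ≃o ℚ)) ∨
    -- (v)
    (∃ c : Bool, Nonempty ({x : X // red x = c} ≃o ℚ) ∧
      (∀ a, red a = c → ∃ b, red b = !c ∧ a ⋖ b) ∧
      (∀ b, red b = !c → ∃ a, red a = c ∧ a ⋖ b)) ∨
    -- (vi)
    (NoMinOrder X ∧ NoMaxOrder X ∧
      ∀ x y : X, x < y →
        (∃ z, x < z ∧ z < y ∧ red z = true) ∧ (∃ z, x < z ∧ z < y ∧ red z = false)) := by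
  classical
  -- basic consequences of automorphisms
  have ared : ∀ {g : X ≃ X}, IsAuto (· < · : X → X → Prop) red R g →
      ∀ x, red (g x) = red x := fun hg => hg.2.1
  have alt : ∀ {g : X ≃ X}, IsAuto (· < · : X → X → Prop) red R g →
      ∀ {x y : X}, x < y ↔ g x < g y := fun {g} hg {x y} => hg.1 x y
  have hpt : ∀ {a b : X}, red a = red b →
      ∃ g : X ≃ X, IsAuto (· < · : X → X → Prop) red R g ∧ g a = b :=
    fun h => pt_trans hIrr hHom h
  have hRff : ∀ {a b : X}, red a = red b → ¬ R a b := fun h hR => (hBip _ _ hR) h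
  have hpairc : ∀ {a b a' b' : X}, a < b → a' < b' → red a' = red a → red b' = red b →
      red a = red b → ∃ g : X ≃ X, IsAuto (· < · : X → X → Prop) red R g ∧
      g a = a' ∧ g b = b' := by
    intro a b a' b' h1 h2 hra hrb hcc
    exact pair_trans hSymm hIrr hHom h1 h2 hra hrb
      (iff_of_false (hRff hcc) (hRff (by rw [hra, hrb]; exact hcc)))
  -- class lemmas
  have cls_nomax : ∀ a w : X, red w = red a → w ≠ a → ∃ b, red b = red a ∧ a < b := by
    intro a w hw hne
    rcases hne.lt_or_gt with h | h
    · obtain ⟨g, hg, hga⟩ := hpt hw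
      refine ⟨g a, by rw [ared hg], ?_⟩
      have h2 : g w < g a := (alt hg).1 h
      rw [hga] at h2; exact h2
    · exact ⟨w, hw, h⟩
  have cls_nomin : ∀ a w : X, red w = red a → w ≠ a → ∃ b, red b = red a ∧ b < a := by
    intro a w hw hne
    rcases hne.lt_or_gt with h | h
    · exact ⟨w, hw, h⟩
    · obtain ⟨g, hg, hga⟩ := hpt hw
      refine ⟨g a, by rw [ared hg], ?_⟩
      have h2 : g a < g w := (alt hg).1 h
      rw [hga] at h2; exact h2
  have cls_dense : ∀ a b : X, red b = red a → a < b →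
      ∃ z, red z = red a ∧ a < z ∧ z < b := by
    intro a b hb hab
    by_contra hno
    push_neg at hno
    obtain ⟨c', hc', hbc'⟩ := cls_nomax b a hb.symm hab.ne
    obtain ⟨g, hg, hga, hgc⟩ := hpairc (hab.trans hbc') hab rfl
      hc'.symm (hc'.trans hb).symm
    have h1 : g a < g b := (alt hg).1 hab
    have h2 : g b < g c' := (alt hg).1 hbc'
    rw [hga] at h1; rw [hgc] at h2
    exact absurd h2 (not_lt.2 (hno (g b) (by rw [ared hg, hb]) h1))
  have one_side : ∀ z : X, (∀ w, red w = red z → w = z) →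
      (∀ x, x ≤ z) ∨ (∀ x, z ≤ x) := by
    intro z hz
    by_cases hu : ∃ u, red u ≠ red z ∧ u < z
    · left
      obtain ⟨u, hu1, hu2⟩ := hu
      intro x
      by_cases hx : red x = red z
      · rw [hz x hx]
      · by_contra hlt
        push_neg at hlt
        obtain ⟨g, hg, hgu⟩ := hpt (a := u) (b := x) (bool_eq_of_ne_ne _ _ _ hu1 hx)
        have h1 : g u < g z := (alt hg).1 hu2
        rw [hgu, hz (g z) (ared hg z)] at h1
        exact lt_asymm hlt h1
    · right
      push_neg at hu
      intro x
      by_cases hx : red x = red z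
      · rw [hz x hx]
      · exact hu x hx
  have cls_iso : ∀ (c : Bool) (a w : X), red a = c → red w = c → a ≠ w →
      Nonempty ({x : X // red x = c} ≃o ℚ) := by
    intro c a w ha hw hne
    haveI : Nonempty {x : X // red x = c} := ⟨⟨a, ha⟩⟩
    have hsecond : ∀ p : X, red p = c → ∃ v, red v = red p ∧ v ≠ p := by
      intro p hp
      rcases eq_or_ne a p with rfl | h
      · exact ⟨w, by rw [hw, hp], fun h => hne h.symm⟩
      · exact ⟨a, by rw [ha, hp], h⟩
    haveI : DenselyOrdered {x : X // red x = c} := by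
      constructor
      rintro ⟨p, hp⟩ ⟨q, hq⟩ hpq
      obtain ⟨z, hz1, hz2, hz3⟩ := cls_dense p q (by rw [hq, hp]) (Subtype.mk_lt_mk.1 hpq)
      exact ⟨⟨z, by rw [hz1, hp]⟩, Subtype.mk_lt_mk.2 hz2, Subtype.mk_lt_mk.2 hz3⟩
    haveI : NoMaxOrder {x : X // red x = c} := by
      constructor
      rintro ⟨p, hp⟩
      obtain ⟨v, hv1, hv2⟩ := hsecond p hp
      obtain ⟨b, hb1, hb2⟩ := cls_nomax p v hv1 hv2
      exact ⟨⟨b, by rw [hb1, hp]⟩, Subtype.mk_lt_mk.2 hb2⟩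
    haveI : NoMinOrder {x : X // red x = c} := by
      constructor
      rintro ⟨p, hp⟩
      obtain ⟨v, hv1, hv2⟩ := hsecond p hp
      obtain ⟨b, hb1, hb2⟩ := cls_nomin p v hv1 hv2
      exact ⟨⟨b, by rw [hb1, hp]⟩, Subtype.mk_lt_mk.2 hb2⟩
    exact Order.iso_of_countable_dense _ ℚ
  have map_cov : ∀ {g : X ≃ X}, IsAuto (· < · : X → X → Prop) red R g →
      ∀ {u v : X}, u ⋖ v → g u ⋖ g v := by
    intro g hg u v huv
    refine ⟨(alt hg).1 huv.1, ?_⟩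
    intro z h1 h2
    have e1 : u < g.symm z ↔ g u < z := by
      have h := alt hg (x := u) (y := g.symm z)
      rwa [Equiv.apply_symm_apply] at h
    have e2 : g.symm z < v ↔ z < g v := by
      have h := alt hg (x := g.symm z) (y := v)
      rwa [Equiv.apply_symm_apply] at h
    exact huv.2 (e1.mpr h1) (e2.mpr h2)
  -- main case analysis
  by_cases hmono : ∀ x y : X, red x = red y
  · by_cases hsub : ∀ y x : X, y = x
    · obtain ⟨x0⟩ := (inferInstance : Nonempty X)
      exact Or.inl (Or.inl ⟨x0, fun y => hsub y x0⟩)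
    · push_neg at hsub
      obtain ⟨u, v, huv⟩ := hsub
      have second : ∀ a : X, ∃ w, w ≠ a := by
        intro a
        rcases eq_or_ne u a with rfl | h
        · exact ⟨v, fun h => huv h.symm⟩
        · exact ⟨u, h⟩
      right; left
      obtain ⟨x0⟩ := (inferInstance : Nonempty X)
      refine ⟨?_, ?_, ?_, ?_⟩
      · cases h0 : red x0 with
        | true => exact Or.inl (fun x => (hmono x x0).trans h0)
        | false => exact Or.inr (fun x => (hmono x x0).trans h0)
      · constructor
        intro a b hab
        obtain ⟨z, _, h1, h2⟩ := cls_dense a b (hmono b a) hab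
        exact ⟨z, h1, h2⟩
      · constructor
        intro a
        obtain ⟨w, hw⟩ := second a
        obtain ⟨b, _, hb⟩ := cls_nomin a w (hmono w a) hw
        exact ⟨b, hb⟩
      · constructor
        intro a
        obtain ⟨w, hw⟩ := second a
        obtain ⟨b, _, hb⟩ := cls_nomax a w (hmono w a) hw
        exact ⟨b, hb⟩
  · push_neg at hmono
    obtain ⟨p0, q0, hpq0⟩ := hmono
    have hex : ∃ rt rf : X, red rt = true ∧ red rf = false := by
      cases h1 : red p0 <;> cases h2 : red q0
      · exact absurd (h1.trans h2.symm) hpq0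
      · exact ⟨q0, p0, h2, h1⟩
      · exact ⟨p0, q0, h1, h2⟩
      · exact absurd (h1.trans h2.symm) hpq0
    obtain ⟨rt, rf, hrt, hrf⟩ := hex
    by_cases hst : ∀ w, red w = true → w = rt
    · by_cases hsf : ∀ w, red w = false → w = rf
      · -- case (i), doubleton
        left; right
        refine ⟨rt, rf, by rw [hrt, hrf]; decide, ?_⟩
        intro z
        cases hz : red z with
        | true => exact Or.inl (hst z hz)
        | false => exact Or.inr (hsf z hz)
      · -- case (iii) with z = rt
        push_neg at hsf
        obtain ⟨w, hw1, hw2⟩ := hsf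
        right; right; left
        refine ⟨rt, fun x hx => hst x (hx.trans hrt), one_side rt
          (fun w' hw' => hst w' (hw'.trans hrt)), ?_⟩
        obtain ⟨e⟩ := cls_iso false rf w hrf hw1 (fun h => hw2 h.symm)
        have hiff : ∀ x : X, red x ≠ red rt ↔ red x = false := by
          intro x; rw [hrt]; exact bool_ne_iff (red x) true
        exact ⟨(OrderIso.setCongr {x : X | red x ≠ red rt} {x : X | red x = false}
          (by ext x; exact hiff x)).trans e⟩
    · push_neg at hst
      obtain ⟨wt, hwt1, hwt2⟩ := hst
      by_cases hsf : ∀ w, red w = false → w = rf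
      · -- case (iii) with z = rf
        right; right; left
        refine ⟨rf, fun x hx => hsf x (hx.trans hrf), one_side rf
          (fun w' hw' => hsf w' (hw'.trans hrf)), ?_⟩
        obtain ⟨e⟩ := cls_iso true rt wt hrt hwt1 (fun h => hwt2 h.symm)
        have hiff : ∀ x : X, red x ≠ red rf ↔ red x = true := by
          intro x; rw [hrf]; exact (bool_ne_iff (red x) false).trans (by simp)
        exact ⟨(OrderIso.setCongr {x : X | red x ≠ red rf} {x : X | red x = true}
          (by ext x; exact hiff x)).trans e⟩
      · push_neg at hsf
        obtain ⟨wf, hwf1, hwf2⟩ := hsf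
        have isoT := cls_iso true rt wt hrt hwt1 (fun h => hwt2 h.symm)
        have isoF := cls_iso false rf wf hrf hwf1 (fun h => hwf2 h.symm)
        by_cases hA : ∃ p q : X, red p = true ∧ red q = false ∧ p < q
        · by_cases hB : ∃ p q : X, red p = false ∧ red q = true ∧ p < q
          · -- interleaved: hard case
            have hint : ∀ c : Bool, ∃ p q : X, red p = c ∧ red q = (!c) ∧ p < q := by
              intro c; cases c
              · simpa using hB
              · simpa using hA
            have between : ∀ a b : X, red b = red a → a < b →
                ∃ z, red z ≠ red a ∧ a < z ∧ z < b := by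
              intro a b hb hab
              by_contra hno
              push_neg at hno
              have uni : ∀ a' b' : X, red a' = red a → red b' = red a → a' < b' →
                  ∀ z, red z ≠ red a → ¬(a' < z ∧ z < b') := by
                rintro a' b' ha' hb' hab' z hz ⟨h1, h2⟩
                obtain ⟨g, hg, hg1, hg2⟩ := hpairc hab' hab ha'.symm
                  (hb.trans hb'.symm) (ha'.trans hb'.symm)
                have k1 : g a' < g z := (alt hg).1 h1
                have k2 : g z < g b' := (alt hg).1 h2
                rw [hg1] at k1; rw [hg2] at k2
                have hzz : red (g z) ≠ red a := by rw [ared hg]; exact hz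
                exact absurd k2 (not_lt.2 (hno (g z) hzz k1))
              obtain ⟨p1, d1, hp1, hd1, hpd1⟩ := hint (red a)
              obtain ⟨d2, q2, hd2, hq2, hdq2⟩ := hint (!(red a))
              have hq2' : red q2 = red a := by rw [hq2]; simp
              have hd1' : red d1 ≠ red a := by rw [hd1]; simp
              have hd2' : red d2 ≠ red a := by rw [hd2]; simp
              have hup : ∀ q, red q = red a → q < d1 := by
                intro q hq
                rcases lt_trichotomy q d1 with h | h | h
                · exact h
                · rw [h] at hq; exact absurd hq hd1'
                · exact absurd ⟨hpd1, h⟩ (uni p1 q hp1 hq (hpd1.trans h) d1 hd1')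
              obtain ⟨g, hg, hgd⟩ := hpt (a := d2) (b := d1) (hd2.trans hd1.symm)
              have k : g d2 < g q2 := (alt hg).1 hdq2
              rw [hgd] at k
              have hq3 : red (g q2) = red a := by rw [ared hg]; exact hq2'
              exact absurd k (not_lt.2 (hup (g q2) hq3).le)
            have second : ∀ a : X, ∃ w, red w = red a ∧ w ≠ a := by
              intro a
              cases ha : red a with
              | false =>
                rcases eq_or_ne rf a with rfl | h
                · exact ⟨wf, by rw [hwf1], hwf2⟩
                · exact ⟨rf, by rw [hrf], h⟩
              | true =>
                rcases eq_or_ne rt a with rfl | h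
                · exact ⟨wt, by rw [hwt1], hwt2⟩
                · exact ⟨rt, by rw [hrt], h⟩
            have hNoMax : NoMaxOrder X := by
              constructor; intro a
              obtain ⟨w, h1, h2⟩ := second a
              obtain ⟨b, _, hb⟩ := cls_nomax a w h1 h2
              exact ⟨b, hb⟩
            have hNoMin : NoMinOrder X := by
              constructor; intro a
              obtain ⟨w, h1, h2⟩ := second a
              obtain ⟨b, _, hb⟩ := cls_nomin a w h1 h2
              exact ⟨b, hb⟩
            by_cases hvi : ∀ x y : X, x < y →
                (∃ z, x < z ∧ z < y ∧ red z = true) ∧ (∃ z, x < z ∧ z < y ∧ red z = false)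
            · exact Or.inr (Or.inr (Or.inr (Or.inr (Or.inr ⟨hNoMin, hNoMax, hvi⟩))))
            · rw [not_forall] at hvi; obtain ⟨x, hvi⟩ := hvi
              rw [not_forall] at hvi; obtain ⟨y, hvi⟩ := hvi
              rw [Classical.not_imp] at hvi
              obtain ⟨hxy, hvi⟩ := hvi
              rw [not_and_or] at hvi
              have hgap : ∃ c0 : Bool, ∀ z, x < z → z < y → red z ≠ c0 := by
                rcases hvi with h | h
                · exact ⟨true, fun z h1 h2 hz => h ⟨z, h1, h2, hz⟩⟩
                · exact ⟨false, fun z h1 h2 hz => h ⟨z, h1, h2, hz⟩⟩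
              obtain ⟨c0, hgap⟩ := hgap
              have hxyne : red x ≠ red y := by
                intro hcc
                obtain ⟨z1, hz1c, hz1a, hz1b⟩ := cls_dense x y hcc.symm hxy
                obtain ⟨z2, hz2c, hz2a, hz2b⟩ := between x y hcc.symm hxy
                rcases eq_or_ne (red x) c0 with h | h
                · exact hgap z1 hz1a hz1b (hz1c.trans h)
                · exact hgap z2 hz2a hz2b (bool_eq_of_ne_ne _ _ _ hz2c h.symm)
              have hcov : x ⋖ y := by
                refine ⟨hxy, ?_⟩
                intro z h1 h2
                have hz : red z ≠ c0 := hgap z h1 h2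
                rcases eq_or_ne (red z) (red x) with h | h
                · obtain ⟨z', hz'c, hz'a, hz'b⟩ := between x z h h1
                  refine hgap z' hz'a (hz'b.trans h2)
                    (bool_eq_of_ne_ne _ _ _ hz'c (fun e => hz (by rw [h, ← e])))
                · have hzy : red y = red z :=
                    bool_eq_of_ne_ne (red y) (red z) (red x) (Ne.symm hxyne) h
                  obtain ⟨z', hz'c, hz'a, hz'b⟩ := between z y hzy h2
                  exact hgap z' (h1.trans hz'a) hz'b
                    (bool_eq_of_ne_ne (red z') c0 (red z) hz'c (Ne.symm hz))
              have hyc : red y = !(red x) := (bool_ne_iff _ _).1 (Ne.symm hxyne)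
              have hclsc : ∀ c : Bool, Nonempty ({x : X // red x = c} ≃o ℚ) := by
                intro c; cases c
                · exact isoF
                · exact isoT
              right; right; right; right; left
              refine ⟨red x, hclsc _, ?_, ?_⟩
              · intro a ha
                obtain ⟨g, hg, hgx⟩ := hpt (a := x) (b := a) ha.symm
                refine ⟨g y, by rw [ared hg, hyc], ?_⟩
                have h := map_cov hg hcov
                rwa [hgx] at h
              · intro b hb
                obtain ⟨g, hg, hgy⟩ := hpt (a := y) (b := b) (by rw [hb, hyc])
                refine ⟨g x, by rw [ared hg], ?_⟩
                have h := map_cov hg hcov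
                rwa [hgy] at h
          · -- all true-points below all false-points
            right; right; right; left
            refine ⟨Or.inl ?_, isoT, isoF⟩
            intro x y hx hy
            rcases lt_trichotomy x y with h | h | h
            · exact h
            · rw [h, hy] at hx; exact absurd hx (by decide)
            · exact absurd ⟨y, x, hy, hx, h⟩ hB
        · -- all false-points below all true-points
          right; right; right; left
          refine ⟨Or.inr ?_, isoT, isoF⟩
          intro x y hx hy
          rcases lt_trichotomy x y with h | h | h
          · exact h
          · rw [h, hy] at hx; exact absurd hx (by decide)
          · exact absurd ⟨y, x, hy, hx, h⟩ hA
end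

section
/- Let (X, <, R) be a countable homogeneous ordered bipartite graph. Then each of the colour classes X_r and X_b is empty, a singleton, or a countable dense linear order without endpoints (hence order-isomorphic to ℚ). -/
/-- Each colour class of a countable homogeneous ordered bipartite graph is empty,
a singleton, or order-isomorphic to ℚ. -/
theorem stmt1 {X : Type*} [LinearOrder X] [Countable X]
    (red : X → Bool) (R : X → X → Prop)
    (hSymm : ∀ x y, R x y → R y x) (hIrr : ∀ x, ¬ R x x)
    (hBip : ∀ x y, R x y → red x ≠ red y)
    (hHom : Homogeneous (· < · : X → X → Prop) red R) :
    ∀ c : Bool,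
      ({x : X | red x = c} = ∅) ∨ (∃ z : X, {x : X | red x = c} = {z}) ∨
        Nonempty ({x : X // red x = c} ≃o ℚ) := by
  intro c
  by_cases h0 : {x : X | red x = c} = ∅
  · exact Or.inl h0
  obtain ⟨a, ha⟩ := Set.nonempty_iff_ne_empty.2 h0
  simp only [Set.mem_setOf_eq] at ha
  by_cases h1 : ∀ x, red x = c → x = a
  · refine Or.inr (Or.inl ⟨a, ?_⟩)
    ext x
    simp only [Set.mem_setOf_eq, Set.mem_singleton_iff]
    exact ⟨fun hx => h1 x hx, fun hx => hx ▸ ha⟩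
  push_neg at h1
  obtain ⟨b, hb, hba⟩ := h1
  obtain ⟨p, q, hp, hq, hpq⟩ : ∃ p q, red p = c ∧ red q = c ∧ p < q := by
    rcases lt_or_gt_of_ne hba with h | h
    · exact ⟨b, a, hb, ha, h⟩
    · exact ⟨a, b, ha, hb, h⟩
  -- no maximum in the colour class
  have noMax : ∀ x, red x = c → ∃ z, red z = c ∧ x < z := by
    intro x hx
    have hiso : IsPartialIso (· < · : X → X → Prop) red R {p} (fun _ => x) := by
      refine ⟨?_, ?_, ?_⟩
      · intro u hu v hv
        simp only [Finset.mem_singleton] at hu hv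
        subst hu; subst hv
        simp [lt_irrefl]
      · intro u hu
        simp only [Finset.mem_singleton] at hu
        subst hu
        rw [hx, hp]
      · intro u hu v hv
        simp only [Finset.mem_singleton] at hu hv
        subst hu; subst hv
        exact iff_of_false (hIrr _) (hIrr _)
    obtain ⟨g, hg, hgp⟩ := hHom {p} (fun _ => x) hiso
    refine ⟨g q, ?_, ?_⟩
    · rw [hg.2.1 q, hq]
    · have := (hg.1 p q).mp hpq
      rwa [hgp p (Finset.mem_singleton_self p)] at this
  have noMin : ∀ x, red x = c → ∃ z, red z = c ∧ z < x := by
    intro x hx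
    have hiso : IsPartialIso (· < · : X → X → Prop) red R {q} (fun _ => x) := by
      refine ⟨?_, ?_, ?_⟩
      · intro u hu v hv
        simp only [Finset.mem_singleton] at hu hv
        subst hu; subst hv
        simp [lt_irrefl]
      · intro u hu
        simp only [Finset.mem_singleton] at hu
        subst hu
        rw [hx, hq]
      · intro u hu v hv
        simp only [Finset.mem_singleton] at hu hv
        subst hu; subst hv
        exact iff_of_false (hIrr _) (hIrr _)
    obtain ⟨g, hg, hgq⟩ := hHom {q} (fun _ => x) hiso
    refine ⟨g p, ?_, ?_⟩
    · rw [hg.2.1 p, hp]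
    · have := (hg.1 p q).mp hpq
      rwa [hgq q (Finset.mem_singleton_self q)] at this
  have dense : ∀ x y, red x = c → red y = c → x < y → ∃ z, red z = c ∧ x < z ∧ z < y := by
    intro x y hx hy hxy
    obtain ⟨w, hw, hyw⟩ := noMax y hy
    have hxw : x ≠ w := ne_of_lt (hxy.trans hyw)
    -- partial iso on {x, w} sending x ↦ x, w ↦ y
    set f : X → X := fun t => if t = x then x else y with hf
    have hfx : f x = x := by simp [hf]
    have hfw : f w = y := by simp [hf, hxw.symm]
    have hmem : ∀ u ∈ ({x, w} : Finset X), u = x ∨ u = w := by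
      intro u hu
      simpa using hu
    have hcol : ∀ u ∈ ({x, w} : Finset X), red (f u) = c := by
      intro u hu
      rcases hmem u hu with h | h <;> subst h
      · rw [hfx, hx]
      · rw [hfw, hy]
    have hiso : IsPartialIso (· < · : X → X → Prop) red R {x, w} f := by
      refine ⟨?_, ?_, ?_⟩
      · intro u hu v hv
        rcases hmem u hu with h | h <;> rcases hmem v hv with h' | h' <;> subst h <;> subst h'
        · rw [hfx]
        · rw [hfx, hfw]
          exact ⟨fun _ => hxy, fun _ => hxy.trans hyw⟩
        · rw [hfx, hfw]
          exact ⟨fun h => absurd h (not_lt.2 (hxy.trans hyw).le),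
            fun h => absurd h (not_lt.2 hxy.le)⟩
        · rw [hfw]
          simp [lt_irrefl]
      · intro u hu
        rcases hmem u hu with h | h <;> subst h
        · rw [hfx]
        · rw [hfw, hw, hy]
      · intro u hu v hv
        have h1 : red u = c := by rcases hmem u hu with h | h <;> subst h <;> assumption
        have h2 : red v = c := by rcases hmem v hv with h | h <;> subst h <;> assumption
        refine iff_of_false (fun hR => hBip u v hR (h1.trans h2.symm)) ?_
        exact fun hR => hBip _ _ hR ((hcol u hu).trans (hcol v hv).symm)
    obtain ⟨g, hg, hgf⟩ := hHom {x, w} f hiso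
    refine ⟨g y, ?_, ?_, ?_⟩
    · rw [hg.2.1 y, hy]
    · have := (hg.1 x y).mp hxy
      rwa [hgf x (by simp), hfx] at this
    · have := (hg.1 y w).mp hyw
      rwa [hgf w (by simp), hfw] at this
  refine Or.inr (Or.inr ?_)
  haveI : Nonempty {x : X // red x = c} := ⟨⟨a, ha⟩⟩
  haveI : DenselyOrdered {x : X // red x = c} := ⟨fun u v huv => by
    obtain ⟨z, hz, h1, h2⟩ := dense u.1 v.1 u.2 v.2 huv
    exact ⟨⟨z, hz⟩, h1, h2⟩⟩
  haveI : NoMaxOrder {x : X // red x = c} := ⟨fun u => by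
    obtain ⟨z, hz, h⟩ := noMax u.1 u.2
    exact ⟨⟨z, hz⟩, h⟩⟩
  haveI : NoMinOrder {x : X // red x = c} := ⟨fun u => by
    obtain ⟨z, hz, h⟩ := noMin u.1 u.2
    exact ⟨⟨z, hz⟩, h⟩⟩
  exact Order.iso_of_countable_dense _ _
end

section
/- Let (X, <, R) be a countable homogeneous ordered bipartite graph in which X is infinite and one of the colour classes is a singleton {z}. Then z does not lie strictly between two points of the other colour; that is, z is either the least or the greatest element of X. -/
/-- If `X` is infinite and one colour class is the singleton `{z}`, then `z` does not lie
strictly between two points of the other colour; that is, `z` is the least or the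
greatest element of `X`. -/
theorem stmt2 {X : Type*} [LinearOrder X] [Countable X] [Infinite X]
    (red : X → Bool) (R : X → X → Prop)
    (hSymm : ∀ x y, R x y → R y x) (hIrr : ∀ x, ¬ R x x)
    (hBip : ∀ x y, R x y → red x ≠ red y)
    (hHom : Homogeneous (· < · : X → X → Prop) red R)
    (z : X) (hz : {x : X | red x = red z} = {z}) :
    (¬ ∃ x y : X, red x ≠ red z ∧ red y ≠ red z ∧ x < z ∧ z < y) ∧
      ((∀ x, x ≤ z) ∨ (∀ x, z ≤ x)) := by
  have hcol : ∀ w : X, red w = red z → w = z := by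
    intro w hw
    have : w ∈ ({x : X | red x = red z}) := hw
    rw [hz] at this
    exact this
  have key : ∀ x y : X, x < z → z < y → False := by
    intro x y hx hy
    have hxz : red x ≠ red z := fun h => absurd (hcol x h) (ne_of_lt hx)
    have hyz : red y ≠ red z := fun h => absurd (hcol y h) (ne_of_gt hy)
    have hxy : red y = red x := by
      revert hxz hyz; cases red x <;> cases red y <;> cases red z <;> simp
    obtain ⟨g, ⟨glt, gred, gR⟩, hg⟩ :=
      hHom {x} (fun _ => y) ⟨
        by intro a ha b hb
           simp only [Finset.mem_singleton] at ha hb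
           subst ha; subst hb
           simp [lt_irrefl],
        by intro a ha
           simp only [Finset.mem_singleton] at ha
           subst ha; exact hxy,
        by intro a ha b hb
           simp only [Finset.mem_singleton] at ha hb
           subst ha; subst hb
           simp [hIrr]⟩
    have hgx : g x = y := hg x (Finset.mem_singleton_self x)
    have hgz : g z = z := hcol (g z) (gred z)
    have : g x < g z := (glt x z).mp hx
    rw [hgx, hgz] at this
    exact absurd hy (not_lt_of_gt this)
  constructor
  · rintro ⟨x, y, _, _, hx, hy⟩
    exact key x y hx hy
  · by_contra h
    push_neg at h
    obtain ⟨⟨a, ha⟩, ⟨b, hb⟩⟩ := h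
    exact key b a hb ha
end

section
/- Let (X, <, R) be a countable homogeneous ordered bipartite graph in which both colour classes X_r and X_b are order-isomorphic to ℚ and in which neither colour class entirely precedes the other. If some red point has an immediate successor in (X, <), then that immediate successor is blue, and every red point has an immediate successor. -/
/-- If both colour classes are copies of ℚ and neither entirely precedes the other, and
some red point has an immediate successor, then that successor is blue and every red
point has an immediate successor. -/
theorem stmt3 {X : Type*} [LinearOrder X] [Countable X]
    (red : X → Bool) (R : X → X → Prop)
    (hSymm : ∀ x y, R x y → R y x) (hIrr : ∀ x, ¬ R x x)
    (hBip : ∀ x y, R x y → red x ≠ red y)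
    (hHom : Homogeneous (· < · : X → X → Prop) red R)
    (hQr : Nonempty ({x : X // red x = true} ≃o ℚ))
    (hQb : Nonempty ({x : X // red x = false} ≃o ℚ))
    (hnp1 : ¬ ∀ x y, red x = true → red y = false → x < y)
    (hnp2 : ¬ ∀ x y, red x = false → red y = true → x < y)
    (a s : X) (ha : red a = true) (hs : a ⋖ s) :
    red s = false ∧ ∀ a' : X, red a' = true → ∃ s' : X, a' ⋖ s' := by
  have hsb : red s = false := by
    cases hrs : red s with
    | false => rfl
    | true =>
      exfalso
      obtain ⟨e⟩ := hQr
      have hlt : (⟨a, ha⟩ : {x : X // red x = true}) < ⟨s, hrs⟩ := hs.1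
      obtain ⟨q, hq1, hq2⟩ := exists_between (e.lt_iff_lt.mpr hlt)
      have h1 : (⟨a, ha⟩ : {x : X // red x = true}) < e.symm q := by
        rw [← e.symm_apply_apply ⟨a, ha⟩]
        exact e.symm.lt_iff_lt.mpr hq1
      have h2 : e.symm q < (⟨s, hrs⟩ : {x : X // red x = true}) := by
        rw [← e.symm_apply_apply ⟨s, hrs⟩]
        exact e.symm.lt_iff_lt.mpr hq2
      exact hs.2 (show a < (e.symm q : X) from h1) (show (e.symm q : X) < s from h2)
  refine ⟨hsb, fun a' ha' => ?_⟩
  have hpi : IsPartialIso (· < · : X → X → Prop) red R {a} (fun _ => a') := by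
    refine ⟨?_, ?_, ?_⟩
    · intro x hx y hy
      simp only [Finset.mem_singleton] at hx hy
      rw [hx, hy]
      simp [lt_irrefl]
    · intro x hx
      simp only [Finset.mem_singleton] at hx
      rw [hx, ha, ha']
    · intro x hx y hy
      simp only [Finset.mem_singleton] at hx hy
      rw [hx, hy]
      exact ⟨fun h => absurd h (hIrr a), fun h => absurd h (hIrr a')⟩
  obtain ⟨g, ⟨hg1, hg2, hg3⟩, hgs⟩ := hHom {a} (fun _ => a') hpi
  have hga : g a = a' := hgs a (Finset.mem_singleton_self a)
  refine ⟨g s, ?_, ?_⟩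
  · rw [← hga]; exact (hg1 a s).mp hs.1
  · intro c hc1 hc2
    have h1 : a < g.symm c := by
      have := (hg1 a (g.symm c)).mpr
      rw [g.apply_symm_apply] at this
      exact this (hga ▸ hc1)
    have h2 : g.symm c < s := by
      have := (hg1 (g.symm c) s).mpr
      rw [g.apply_symm_apply] at this
      exact this hc2
    exact hs.2 h1 h2
end

section
/- Let (X, <, R) be a countable homogeneous ordered bipartite graph in which both colour classes X_r and X_b are order-isomorphic to ℚ, neither colour class entirely precedes the other, and no point of X has an immediate successor. Then for any x < y in X there is a red point and a blue point strictly between x and y; consequently (X, <) with its colouring is isomorphic to the generic 2-coloured linear order ℚ₂. -/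
section Aux

variable {X : Type*} [LinearOrder X] {red : X → Bool} {R : X → X → Prop}

/-- In a bipartite graph, same-coloured points are never related. -/
lemma noR_same (hBip : ∀ x y, R x y → red x ≠ red y) {a b : X} (h : red a = red b) :
    ¬ R a b := fun hR => hBip a b hR h

/-- One-point homogeneity: any point can be mapped to any point of the same colour
by an automorphism. -/
lemma auto_one (hBip : ∀ x y, R x y → red x ≠ red y)
    (hHom : Homogeneous (· < · : X → X → Prop) red R) (a a' : X) (h : red a' = red a) :
    ∃ g : X ≃ X, IsAuto (· < · : X → X → Prop) red R g ∧ g a = a' := by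
  have hpi : IsPartialIso (· < · : X → X → Prop) red R {a} (fun _ => a') := by
    refine ⟨?_, ?_, ?_⟩
    · intro x hx y hy
      simp only [Finset.mem_singleton] at hx hy
      subst hx; subst hy; simp
    · intro x hx
      simp only [Finset.mem_singleton] at hx
      subst hx; exact h
    · intro x hx y hy
      simp only [Finset.mem_singleton] at hx hy
      subst hx; subst hy
      exact iff_of_false (noR_same hBip rfl) (noR_same hBip rfl)
  obtain ⟨g, hg, hga⟩ := hHom _ _ hpi
  exact ⟨g, hg, hga a (Finset.mem_singleton_self a)⟩

/-- Two-point homogeneity for same-coloured pairs: any increasing pair of points of a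
given colour can be mapped onto any other such pair. -/
lemma auto_two (hBip : ∀ x y, R x y → red x ≠ red y)
    (hHom : Homogeneous (· < · : X → X → Prop) red R) {a b a' b' : X}
    (hab : a < b) (hab' : a' < b')
    (h1 : red b = red a) (h2 : red a' = red a) (h3 : red b' = red a) :
    ∃ g : X ≃ X, IsAuto (· < · : X → X → Prop) red R g ∧ g a = a' ∧ g b = b' := by
  classical
  have hne : b ≠ a := hab.ne'
  set f : X → X := fun x => if x = a then a' else b' with hf
  have hfa : f a = a' := by simp [hf]
  have hfb : f b = b' := by simp [hf, hne]
  have hpi : IsPartialIso (· < · : X → X → Prop) red R {a, b} f := by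
    refine ⟨?_, ?_, ?_⟩
    · intro x hx y hy
      simp only [Finset.mem_insert, Finset.mem_singleton] at hx hy
      rcases hx with rfl | rfl <;> rcases hy with rfl | rfl <;>
        simp [hfa, hfb, hab, hab', hab.not_gt, hab'.not_gt]
    · intro x hx
      simp only [Finset.mem_insert, Finset.mem_singleton] at hx
      rcases hx with rfl | rfl
      · rw [hfa, h2]
      · rw [hfb, h3, h1]
    · intro x hx y hy
      simp only [Finset.mem_insert, Finset.mem_singleton] at hx hy
      rcases hx with rfl | rfl <;> rcases hy with rfl | rfl
      · rw [hfa]; exact iff_of_false (noR_same hBip rfl) (noR_same hBip rfl)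
      · rw [hfa, hfb]
        exact iff_of_false (noR_same hBip h1.symm) (noR_same hBip (h2.trans h3.symm))
      · rw [hfa, hfb]
        exact iff_of_false (noR_same hBip h1) (noR_same hBip (h3.trans h2.symm))
      · rw [hfb]; exact iff_of_false (noR_same hBip rfl) (noR_same hBip rfl)
  obtain ⟨g, hg, hga⟩ := hHom _ _ hpi
  refine ⟨g, hg, ?_, ?_⟩
  · rw [hga a (by simp), hfa]
  · rw [hga b (by simp), hfb]

/-- The key density lemma: if points of both colours occur on each side of each
other, then every open interval contains a point of each colour `c`. -/
lemma between_of (hBip : ∀ x y, R x y → red x ≠ red y)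
    (hHom : Homogeneous (· < · : X → X → Prop) red R)
    (hd : DenselyOrdered X) (c : Bool)
    (hcr1 : ∃ p q : X, red p = c ∧ red q = !c ∧ p < q)
    (hcr2 : ∃ p q : X, red p = !c ∧ red q = c ∧ p < q) :
    ∀ x y : X, x < y → ∃ z, x < z ∧ z < y ∧ red z = c := by
  intro x y hxy
  by_contra hcon
  push_neg at hcon
  have hall : ∀ z, x < z → z < y → red z = !c := by
    intro z h1' h2'
    have hz := hcon z h1' h2'
    cases hzz : red z <;> cases c <;> simp_all
  obtain ⟨z, hxz, hzy⟩ := hd.dense x y hxy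
  obtain ⟨w, hzw, hwy⟩ := hd.dense z y hzy
  have hz : red z = !c := hall z hxz hzy
  have hw : red w = !c := hall w (hxz.trans hzw) hwy
  obtain ⟨p, q, hp, hq, hpq⟩ := hcr1
  obtain ⟨g1, hg1, hg1q⟩ := auto_one hBip hHom q z (hz.trans hq.symm)
  have hb1c : red (g1 p) = c := (hg1.2.1 p).trans hp
  have hb1z : g1 p < z := by rw [← hg1q]; exact (hg1.1 p q).mp hpq
  obtain ⟨p', q', hp', hq', hpq'⟩ := hcr2
  obtain ⟨g2, hg2, hg2q⟩ := auto_one hBip hHom q' (g1 p) (hb1c.trans hq'.symm)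
  have huc : red (g2 p') = !c := (hg2.2.1 p').trans hp'
  have hub : g2 p' < g1 p := by rw [← hg2q]; exact (hg2.1 p' q').mp hpq'
  obtain ⟨g3, hg3, hg3a, hg3b⟩ := auto_two hBip hHom (hub.trans hb1z) hzw
      (hz.trans huc.symm) (hz.trans huc.symm) (hw.trans huc.symm)
  have hcol : red (g3 (g1 p)) = c := (hg3.2.1 (g1 p)).trans hb1c
  have hlo : z < g3 (g1 p) := by rw [← hg3a]; exact (hg3.1 _ _).mp hub
  have hhi : g3 (g1 p) < w := by rw [← hg3b]; exact (hg3.1 _ _).mp hb1z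
  have := hall (g3 (g1 p)) (hxz.trans hlo) (hhi.trans hwy)
  rw [hcol] at this
  exact absurd this (by cases c <;> simp)

end Aux

/-- If both colour classes are copies of ℚ, neither entirely precedes the other, and no
point has an immediate successor, then between any two points there are a red and a blue
point; consequently the coloured order is the generic 2-coloured order ℚ₂ (a countable
dense linear order without endpoints with both colours dense). -/
theorem stmt4 {X : Type*} [LinearOrder X] [Countable X]
    (red : X → Bool) (R : X → X → Prop)
    (hSymm : ∀ x y, R x y → R y x) (hIrr : ∀ x, ¬ R x x)
    (hBip : ∀ x y, R x y → red x ≠ red y)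
    (hHom : Homogeneous (· < · : X → X → Prop) red R)
    (hQr : Nonempty ({x : X // red x = true} ≃o ℚ))
    (hQb : Nonempty ({x : X // red x = false} ≃o ℚ))
    (hnp1 : ¬ ∀ x y, red x = true → red y = false → x < y)
    (hnp2 : ¬ ∀ x y, red x = false → red y = true → x < y)
    (hnoSucc : ∀ x : X, ¬ ∃ y : X, x ⋖ y) :
    (∀ x y : X, x < y →
        (∃ z, x < z ∧ z < y ∧ red z = true) ∧ (∃ z, x < z ∧ z < y ∧ red z = false)) ∧
      Nonempty X ∧ NoMinOrder X ∧ NoMaxOrder X ∧ DenselyOrdered X := by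
  -- dense order from absence of covers
  have hdense : DenselyOrdered X := by
    constructor
    intro x y hxy
    have h := hnoSucc x
    push_neg at h
    have h2 := h y
    rw [not_covBy_iff hxy] at h2
    exact h2
  -- there is a blue point below a red point
  have hc1 : ∃ p q : X, red p = false ∧ red q = true ∧ p < q := by
    push_neg at hnp1
    obtain ⟨a, b, ha, hb, hle⟩ := hnp1
    refine ⟨b, a, hb, ha, lt_of_le_of_ne hle ?_⟩
    intro h; rw [h, ha] at hb; exact Bool.noConfusion hb
  -- there is a red point below a blue point
  have hc2 : ∃ p q : X, red p = true ∧ red q = false ∧ p < q := by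
    push_neg at hnp2
    obtain ⟨a, b, ha, hb, hle⟩ := hnp2
    refine ⟨b, a, hb, ha, lt_of_le_of_ne hle ?_⟩
    intro h; rw [h, ha] at hb; exact Bool.noConfusion hb
  have hmain : ∀ x y : X, x < y →
      (∃ z, x < z ∧ z < y ∧ red z = true) ∧ (∃ z, x < z ∧ z < y ∧ red z = false) := by
    intro x y hxy
    constructor
    · exact between_of hBip hHom hdense true (by simpa using hc2) (by simpa using hc1) x y hxy
    · exact between_of hBip hHom hdense false (by simpa using hc1) (by simpa using hc2) x y hxy
  obtain ⟨p0, q0, hp0, hq0, _⟩ := hc1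
  have hNoMin : NoMinOrder X := by
    constructor
    intro a
    cases ha : red a
    · obtain ⟨e⟩ := hQb
      obtain ⟨q, hq⟩ := exists_lt (e ⟨a, ha⟩)
      have : e.symm q < (⟨a, ha⟩ : {x : X // red x = false}) := by
        rw [← e.symm_apply_apply ⟨a, ha⟩]
        exact e.symm.lt_iff_lt.mpr hq
      exact ⟨(e.symm q : X), Subtype.coe_lt_coe.mpr this⟩
    · obtain ⟨e⟩ := hQr
      obtain ⟨q, hq⟩ := exists_lt (e ⟨a, ha⟩)
      have : e.symm q < (⟨a, ha⟩ : {x : X // red x = true}) := by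
        rw [← e.symm_apply_apply ⟨a, ha⟩]
        exact e.symm.lt_iff_lt.mpr hq
      exact ⟨(e.symm q : X), Subtype.coe_lt_coe.mpr this⟩
  have hNoMax : NoMaxOrder X := by
    constructor
    intro a
    cases ha : red a
    · obtain ⟨e⟩ := hQb
      obtain ⟨q, hq⟩ := exists_gt (e ⟨a, ha⟩)
      have : (⟨a, ha⟩ : {x : X // red x = false}) < e.symm q := by
        rw [← e.symm_apply_apply ⟨a, ha⟩]
        exact e.symm.lt_iff_lt.mpr hq
      exact ⟨(e.symm q : X), Subtype.coe_lt_coe.mpr this⟩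
    · obtain ⟨e⟩ := hQr
      obtain ⟨q, hq⟩ := exists_gt (e ⟨a, ha⟩)
      have : (⟨a, ha⟩ : {x : X // red x = true}) < e.symm q := by
        rw [← e.symm_apply_apply ⟨a, ha⟩]
        exact e.symm.lt_iff_lt.mpr hq
      exact ⟨(e.symm q : X), Subtype.coe_lt_coe.mpr this⟩
  exact ⟨hmain, ⟨p0⟩, hNoMin, hNoMax, hdense⟩
end

section
/- Let (X, <, R) be a countable homogeneous ordered bipartite graph in which one colour class is a singleton and the other is order-isomorphic to ℚ (the singleton being a least or greatest point of X). Then R is either empty or complete (i.e., every red point is joined to every blue point). -/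
/-- If one colour class is a singleton `{z}` (which is a least or greatest point of `X`)
and the other colour class is a copy of ℚ, then `R` is empty or complete. -/
theorem stmt5 {X : Type*} [LinearOrder X] [Countable X]
    (red : X → Bool) (R : X → X → Prop)
    (hSymm : ∀ x y, R x y → R y x) (hIrr : ∀ x, ¬ R x x)
    (hBip : ∀ x y, R x y → red x ≠ red y)
    (hHom : Homogeneous (· < · : X → X → Prop) red R)
    (z : X) (hz : {x : X | red x = red z} = {z})
    (hQ : Nonempty ({x : X // red x ≠ red z} ≃o ℚ))
    (hend : (∀ x, x ≤ z) ∨ (∀ x, z ≤ x)) :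
    (∀ x y, ¬ R x y) ∨ (∀ x y, red x ≠ red y → R x y) := by
  -- membership form of hz
  have hz' : ∀ x : X, red x = red z → x = z := by
    intro x hx
    have : x ∈ ({x : X | red x = red z} : Set X) := hx
    rw [hz] at this
    exact this
  -- a singleton map is always a partial iso, so we can move any point to a
  -- same-coloured point by an automorphism fixing z
  have move : ∀ p q : X, red q = red p → (R z q ↔ R z p) := by
    intro p q hpq
    have hpi : IsPartialIso (· < · : X → X → Prop) red R {p} (fun _ => q) := by
      refine ⟨?_, ?_, ?_⟩
      · intro x hx y hy
        simp only [Finset.mem_singleton] at hx hy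
        subst hx; subst hy
        simp [lt_irrefl]
      · intro x hx
        simp only [Finset.mem_singleton] at hx
        subst hx; exact hpq
      · intro x hx y hy
        simp only [Finset.mem_singleton] at hx hy
        subst hx; subst hy
        simp [hIrr]
    obtain ⟨g, ⟨hglt, hgred, hgR⟩, hgp⟩ := hHom _ _ hpi
    have hgp' : g p = q := hgp p (Finset.mem_singleton_self p)
    have hgz : g z = z := hz' (g z) (hgred z)
    have := hgR z p
    rw [hgz, hgp'] at this
    exact this.symm
  -- any edge involves z
  have edgez : ∀ x y : X, R x y → x = z ∨ y = z := by
    intro x y hR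
    have hxy := hBip x y hR
    have : red x = red z ∨ red y = red z := by
      cases hx : red x <;> cases hy : red y <;> cases hzz : red z <;> simp_all
    rcases this with h | h
    · exact Or.inl (hz' x h)
    · exact Or.inr (hz' y h)
  by_cases h : ∀ y, ¬ R z y
  · left
    intro x y hR
    rcases edgez x y hR with rfl | rfl
    · exact h y hR
    · exact h x (hSymm x y hR)
  · right
    push_neg at h
    obtain ⟨a, ha⟩ := h
    have hra : red a ≠ red z := fun hh => (hBip z a ha) hh.symm
    have key : ∀ y : X, red y ≠ red z → R z y := by
      intro y hy
      have hay : red y = red a := by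
        cases hx : red y <;> cases hy2 : red a <;> cases hzz : red z <;> simp_all
      exact (move y a hay.symm).mp ha
    intro x y hxy
    have : red x = red z ∨ red y = red z := by
      cases hx : red x <;> cases hy : red y <;> cases hzz : red z <;> simp_all
    rcases this with h1 | h1
    · have hx : x = z := hz' x h1
      have hyz : red y ≠ red z := fun hh => hxy (by rw [h1, hh])
      rw [hx]
      exact key y hyz
    · have hy : y = z := hz' y h1
      have hxz : red x ≠ red z := fun hh => hxy (by rw [hh, h1])
      rw [hy]
      exact hSymm z x (key x hxz)
end

section
/- Let (X, <, R) be a countable homogeneous ordered bipartite graph in which every red point precedes every blue point and both colour classes X_r and X_b are order-isomorphic to ℚ. Then for every red point a, the set R(a) of blue neighbours of a does not have exactly one element, and its complement X_b \ R(a) does not have exactly one element; the same holds for the red neighbours of any blue point. -/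
lemma exists_gt_col {X : Type*} [LinearOrder X] {red : X → Bool} {c : Bool}
    (hQ : Nonempty ({x : X // red x = c} ≃o ℚ)) {b : X} (hb : red b = c) :
    ∃ y : X, red y = c ∧ b < y := by
  obtain ⟨e⟩ := hQ
  refine ⟨(e.symm (e ⟨b, hb⟩ + 1) : {x : X // red x = c}), (e.symm _).2, ?_⟩
  have h : (⟨b, hb⟩ : {x : X // red x = c}) < e.symm (e ⟨b, hb⟩ + 1) := by
    rw [← e.lt_iff_lt]; simp
  exact h

lemma exists_lt_col {X : Type*} [LinearOrder X] {red : X → Bool} {c : Bool}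
    (hQ : Nonempty ({x : X // red x = c} ≃o ℚ)) {b : X} (hb : red b = c) :
    ∃ y : X, red y = c ∧ y < b := by
  obtain ⟨e⟩ := hQ
  refine ⟨(e.symm (e ⟨b, hb⟩ - 1) : {x : X // red x = c}), (e.symm _).2, ?_⟩
  have h : e.symm (e ⟨b, hb⟩ - 1) < (⟨b, hb⟩ : {x : X // red x = c}) := by
    rw [← e.lt_iff_lt]; simp
  exact h

lemma key {X : Type*} [LinearOrder X]
    (red : X → Bool) (R : X → X → Prop)
    (hSymm : ∀ x y, R x y → R y x) (hIrr : ∀ x, ¬ R x x)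
    (hHom : Homogeneous (· < · : X → X → Prop) red R)
    (hlt : ∀ x y, red x = true → red y = false → x < y)
    (a b c1 c2 : X) (P : X → Prop)
    (hab : red a ≠ red b) (hc1 : red c1 = red b) (hc2 : red c2 = red b)
    (h1 : c1 < b) (h2 : b < c2)
    (hR : R a c2 ↔ R a c1)
    (hset : ∀ x, (red x = red b ∧ P x) ↔ x = b)
    (hPg : ∀ g : X ≃ X, IsAuto (· < · : X → X → Prop) red R g → g a = a → P b → P (g b)) :
    False := by
  classical
  have hac2 : a ≠ c2 := fun h => hab (by rw [h, hc2])
  have horder : ∀ x, red x = red b → ((a < x ↔ red a = true) ∧ (x < a ↔ red a = false)) := by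
    intro x hx
    cases hra : red a with
    | true =>
        have hxf : red x = false := by
          cases hrb : red b with
          | true => exact absurd (by rw [hra, hrb]) hab
          | false => rw [hx, hrb]
        have h := hlt a x hra hxf
        exact ⟨⟨fun _ => rfl, fun _ => h⟩, ⟨fun h' => absurd h' (asymm h), by simp⟩⟩
    | false =>
        have hxt : red x = true := by
          cases hrb : red b with
          | true => rw [hx, hrb]
          | false => exact absurd (by rw [hra, hrb]) hab
        have h := hlt x a hxt hra
        exact ⟨⟨fun h' => absurd h' (asymm h), by simp⟩, ⟨fun _ => rfl, fun _ => h⟩⟩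
  set f : X → X := fun x => if x = c2 then c1 else x with hf
  have hfa : f a = a := by simp [hf, hac2]
  have hfc2 : f c2 = c1 := by simp [hf]
  have hPI : IsPartialIso (· < · : X → X → Prop) red R {a, c2} f := by
    refine ⟨?_, ?_, ?_⟩
    · intro x hx y hy
      simp only [Finset.mem_insert, Finset.mem_singleton] at hx hy
      rcases hx with rfl | hx <;> rcases hy with rfl | hy
      · simp
      · simp only [hy, hfa, hfc2, (horder c2 hc2).1, (horder c1 hc1).1]
      · simp only [hx, hfa, hfc2, (horder c2 hc2).2, (horder c1 hc1).2]
      · rw [hx, hy]; simp [hfc2]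
    · intro x hx
      simp only [Finset.mem_insert, Finset.mem_singleton] at hx
      rcases hx with rfl | hx
      · rw [hfa]
      · rw [hx, hfc2, hc1, hc2]
    · intro x hx y hy
      simp only [Finset.mem_insert, Finset.mem_singleton] at hx hy
      rcases hx with rfl | hx <;> rcases hy with rfl | hy
      · rw [hfa]
      · rw [hy, hfa, hfc2]; exact hR
      · rw [hx, hfa, hfc2]
        constructor
        · intro h; exact hSymm _ _ (hR.mp (hSymm _ _ h))
        · intro h; exact hSymm _ _ (hR.mpr (hSymm _ _ h))
      · rw [hx, hy, hfc2]; exact iff_of_false (hIrr _) (hIrr _)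
  obtain ⟨g, hg, hgs⟩ := hHom _ _ hPI
  have hga : g a = a := by rw [hgs a (by simp), hfa]
  have hgc2 : g c2 = c1 := by rw [hgs c2 (by simp), hfc2]
  have hPb : P b := ((hset b).mpr rfl).2
  have hgb : g b = b := by
    apply (hset (g b)).mp
    exact ⟨by rw [hg.2.1 b], hPg g hg hga hPb⟩
  have := (hg.1 b c2).mp h2
  rw [hgb, hgc2] at this
  exact absurd this (asymm h1)


/-- In case (iv) (all reds precede all blues, both classes copies of ℚ), for each red
point `a` neither `R(a)` nor its complement in the blue class has exactly one element;
similarly for blue points. -/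
theorem stmt6 {X : Type*} [LinearOrder X] [Countable X]
    (red : X → Bool) (R : X → X → Prop)
    (hSymm : ∀ x y, R x y → R y x) (hIrr : ∀ x, ¬ R x x)
    (hBip : ∀ x y, R x y → red x ≠ red y)
    (hHom : Homogeneous (· < · : X → X → Prop) red R)
    (hlt : ∀ x y, red x = true → red y = false → x < y)
    (hQr : Nonempty ({x : X // red x = true} ≃o ℚ))
    (hQb : Nonempty ({x : X // red x = false} ≃o ℚ)) :
    (∀ a : X, red a = true →
      (¬ ∃ b : X, {b' : X | red b' = false ∧ R a b'} = {b}) ∧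
      (¬ ∃ b : X, {b' : X | red b' = false ∧ ¬ R a b'} = {b})) ∧
    (∀ b : X, red b = false →
      (¬ ∃ a : X, {a' : X | red a' = true ∧ R a' b} = {a}) ∧
      (¬ ∃ a : X, {a' : X | red a' = true ∧ ¬ R a' b} = {a})) := by
  constructor
  · intro a ha
    constructor
    · rintro ⟨b, hb⟩
      have hset : ∀ x, (red x = false ∧ R a x) ↔ x = b := fun x => by
        simp only [Set.ext_iff, Set.mem_setOf_eq, Set.mem_singleton_iff] at hb
        exact hb x
      obtain ⟨hbcol, hRab⟩ := (hset b).mpr rfl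
      obtain ⟨c2, hc2col, hbc2⟩ := exists_gt_col hQb hbcol
      obtain ⟨c1, hc1col, hc1b⟩ := exists_lt_col hQb hbcol
      refine key red R hSymm hIrr hHom hlt a b c1 c2 (fun x => R a x)
        (by rw [ha, hbcol]; simp) (by rw [hc1col, hbcol]) (by rw [hc2col, hbcol])
        hc1b hbc2 ?_ (fun x => by rw [hbcol]; exact hset x) ?_
      · constructor
        · intro h; exact absurd ((hset c2).mp ⟨hc2col, h⟩) (ne_of_gt hbc2)
        · intro h; exact absurd ((hset c1).mp ⟨hc1col, h⟩) (ne_of_lt hc1b)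
      · intro g hg hga hPb
        have := (hg.2.2 a b).mp hPb
        rwa [hga] at this
    · rintro ⟨b, hb⟩
      have hset : ∀ x, (red x = false ∧ ¬ R a x) ↔ x = b := fun x => by
        simp only [Set.ext_iff, Set.mem_setOf_eq, Set.mem_singleton_iff] at hb
        exact hb x
      obtain ⟨hbcol, hRab⟩ := (hset b).mpr rfl
      obtain ⟨c2, hc2col, hbc2⟩ := exists_gt_col hQb hbcol
      obtain ⟨c1, hc1col, hc1b⟩ := exists_lt_col hQb hbcol
      refine key red R hSymm hIrr hHom hlt a b c1 c2 (fun x => ¬ R a x)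
        (by rw [ha, hbcol]; simp) (by rw [hc1col, hbcol]) (by rw [hc2col, hbcol])
        hc1b hbc2 ?_ (fun x => by rw [hbcol]; exact hset x) ?_
      · constructor
        · intro _ 
          by_contra h
          exact absurd ((hset c1).mp ⟨hc1col, h⟩) (ne_of_lt hc1b)
        · intro _
          by_contra h
          exact absurd ((hset c2).mp ⟨hc2col, h⟩) (ne_of_gt hbc2)
      · intro g hg hga hPb hRgb
        have := (hg.2.2 a b).mpr (by rwa [hga])
        exact hPb this
  · intro b hb0
    constructor
    · rintro ⟨a, hb⟩
      have hset : ∀ x, (red x = true ∧ R x b) ↔ x = a := fun x => by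
        simp only [Set.ext_iff, Set.mem_setOf_eq, Set.mem_singleton_iff] at hb
        exact hb x
      obtain ⟨hacol, hRab⟩ := (hset a).mpr rfl
      obtain ⟨c2, hc2col, hbc2⟩ := exists_gt_col hQr hacol
      obtain ⟨c1, hc1col, hc1b⟩ := exists_lt_col hQr hacol
      refine key red R hSymm hIrr hHom hlt b a c1 c2 (fun x => R x b)
        (by rw [hb0, hacol]; simp) (by rw [hc1col, hacol]) (by rw [hc2col, hacol])
        hc1b hbc2 ?_ (fun x => by rw [hacol]; exact hset x) ?_
      · constructor
        · intro h
          exact absurd ((hset c2).mp ⟨hc2col, hSymm _ _ h⟩) (ne_of_gt hbc2)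
        · intro h
          exact absurd ((hset c1).mp ⟨hc1col, hSymm _ _ h⟩) (ne_of_lt hc1b)
      · intro g hg hgb hPa
        have := (hg.2.2 a b).mp hPa
        rwa [hgb] at this
    · rintro ⟨a, hb⟩
      have hset : ∀ x, (red x = true ∧ ¬ R x b) ↔ x = a := fun x => by
        simp only [Set.ext_iff, Set.mem_setOf_eq, Set.mem_singleton_iff] at hb
        exact hb x
      obtain ⟨hacol, hRab⟩ := (hset a).mpr rfl
      obtain ⟨c2, hc2col, hbc2⟩ := exists_gt_col hQr hacol
      obtain ⟨c1, hc1col, hc1b⟩ := exists_lt_col hQr hacol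
      refine key red R hSymm hIrr hHom hlt b a c1 c2 (fun x => ¬ R x b)
        (by rw [hb0, hacol]; simp) (by rw [hc1col, hacol]) (by rw [hc2col, hacol])
        hc1b hbc2 ?_ (fun x => by rw [hacol]; exact hset x) ?_
      · constructor
        · intro _
          by_contra h
          exact absurd ((hset c1).mp ⟨hc1col, fun h' => h (hSymm _ _ h')⟩) (ne_of_lt hc1b)
        · intro _
          by_contra h
          exact absurd ((hset c2).mp ⟨hc2col, fun h' => h (hSymm _ _ h')⟩) (ne_of_gt hbc2)
      · intro g hg hgb hPa hRg
        have := (hg.2.2 a b).mpr (by rwa [hgb])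
        exact hPa this
end

section
/- Let (X, <, R) be a countable homogeneous ordered bipartite graph in which every red point precedes every blue point, both colour classes X_r and X_b are order-isomorphic to ℚ, and R is neither empty nor complete. Then for every red point a, the set R(a) of blue neighbours of a is infinite and its complement X_b \ R(a) is infinite. -/
/-- In case (iv), if `R` is neither empty nor complete, then for each red point `a`
both `R(a)` and its complement in the blue class are infinite. -/
theorem stmt7 {X : Type*} [LinearOrder X] [Countable X]
    (red : X → Bool) (R : X → X → Prop)
    (hSymm : ∀ x y, R x y → R y x) (hIrr : ∀ x, ¬ R x x)
    (hBip : ∀ x y, R x y → red x ≠ red y)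
    (hHom : Homogeneous (· < · : X → X → Prop) red R)
    (hlt : ∀ x y, red x = true → red y = false → x < y)
    (hQr : Nonempty ({x : X // red x = true} ≃o ℚ))
    (hQb : Nonempty ({x : X // red x = false} ≃o ℚ))
    (hne : ∃ x y, R x y)
    (hnc : ∃ x y, red x ≠ red y ∧ ¬ R x y) :
    ∀ a : X, red a = true →
      {b : X | red b = false ∧ R a b}.Infinite ∧
      {b : X | red b = false ∧ ¬ R a b}.Infinite := by
  classical
  intro a ha
  obtain ⟨e⟩ := hQb
  -- infinitely many blue points below any blue point
  have hblue_lt : ∀ b : X, ∀ hb : red b = false, {c : X | red c = false ∧ c < b}.Infinite := by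
    intro b hb
    haveI : Infinite (Set.Iio (e ⟨b, hb⟩)) :=
      Set.infinite_coe_iff.mpr (Set.Iio_infinite _)
    apply Set.infinite_of_injective_forall_mem
      (f := fun q : Set.Iio (e ⟨b, hb⟩) => (e.symm q.1 : {x : X // red x = false}).1)
      (fun q q' h => Subtype.ext (e.symm.injective (Subtype.ext h)))
    · intro q
      refine ⟨(e.symm q.1).2, ?_⟩
      have h1 : e.symm q.1 < e.symm (e ⟨b, hb⟩) := e.symm.strictMono q.2
      rw [e.symm_apply_apply] at h1
      exact_mod_cast h1
  -- infinitely many blue points above any blue point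
  have hblue_gt : ∀ b : X, ∀ hb : red b = false, {c : X | red c = false ∧ b < c}.Infinite := by
    intro b hb
    haveI : Infinite (Set.Ioi (e ⟨b, hb⟩)) :=
      Set.infinite_coe_iff.mpr (Set.Ioi_infinite _)
    apply Set.infinite_of_injective_forall_mem
      (f := fun q : Set.Ioi (e ⟨b, hb⟩) => (e.symm q.1 : {x : X // red x = false}).1)
      (fun q q' h => Subtype.ext (e.symm.injective (Subtype.ext h)))
    · intro q
      refine ⟨(e.symm q.1).2, ?_⟩
      have h1 : e.symm (e ⟨b, hb⟩) < e.symm q.1 := e.symm.strictMono q.2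
      rw [e.symm_apply_apply] at h1
      exact_mod_cast h1
  -- an automorphism moving any red point to a
  have move : ∀ a0 : X, red a0 = true → ∃ g : X ≃ X,
      IsAuto (· < · : X → X → Prop) red R g ∧ g a0 = a := by
    intro a0 ha0
    have hpi : IsPartialIso (· < · : X → X → Prop) red R {a0} (fun _ => a) := by
      refine ⟨?_, ?_, ?_⟩
      · intro x hx y hy
        simp only [Finset.mem_singleton] at hx hy
        subst hx; subst hy
        simp [lt_irrefl]
      · intro x hx
        simp only [Finset.mem_singleton] at hx
        subst hx; rw [ha, ha0]
      · intro x hx y hy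
        simp only [Finset.mem_singleton] at hx hy
        subst hx; subst hy
        exact iff_of_false (hIrr _) (hIrr _)
    obtain ⟨g, hg, hfix⟩ := hHom {a0} (fun _ => a) hpi
    exact ⟨g, hg, hfix a0 (Finset.mem_singleton_self a0)⟩
  -- a has a blue neighbour
  have hFne : ∃ b, red b = false ∧ R a b := by
    obtain ⟨x, y, hxy⟩ := hne
    have hxyc := hBip x y hxy
    obtain ⟨a0, b0, ha0, hb0, hR0⟩ : ∃ a0 b0, red a0 = true ∧ red b0 = false ∧ R a0 b0 := by
      cases hx : red x with
      | true =>
        refine ⟨x, y, hx, ?_, hxy⟩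
        cases hy : red y with
        | true => exact absurd (hx.trans hy.symm) hxyc
        | false => rfl
      | false =>
        refine ⟨y, x, ?_, hx, hSymm x y hxy⟩
        cases hy : red y with
        | true => rfl
        | false => exact absurd (hx.trans hy.symm) hxyc
    obtain ⟨g, hg, hga⟩ := move a0 ha0
    refine ⟨g b0, by rw [hg.2.1]; exact hb0, ?_⟩
    have h := hg.2.2 a0 b0
    rw [hga] at h
    exact h.mp hR0
  -- a has a blue non-neighbour
  have hCne : ∃ b, red b = false ∧ ¬ R a b := by
    obtain ⟨x, y, hxyc, hxy⟩ := hnc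
    obtain ⟨a0, b0, ha0, hb0, hR0⟩ : ∃ a0 b0, red a0 = true ∧ red b0 = false ∧ ¬ R a0 b0 := by
      cases hx : red x with
      | true =>
        refine ⟨x, y, hx, ?_, hxy⟩
        cases hy : red y with
        | true => exact absurd (hx.trans hy.symm) hxyc
        | false => rfl
      | false =>
        refine ⟨y, x, ?_, hx, fun h => hxy (hSymm y x h)⟩
        cases hy : red y with
        | true => rfl
        | false => exact absurd (hx.trans hy.symm) hxyc
    obtain ⟨g, hg, hga⟩ := move a0 ha0
    refine ⟨g b0, by rw [hg.2.1]; exact hb0, ?_⟩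
    have h := hg.2.2 a0 b0
    rw [hga] at h
    exact fun hc => hR0 (h.mpr hc)
  -- the core argument: the class {b blue | R a b ↔ p} cannot be finite and nonempty
  have core : ∀ p : Prop, (∃ b, red b = false ∧ (R a b ↔ p)) →
      {b : X | red b = false ∧ (R a b ↔ p)}.Infinite := by
    intro p hsne
    by_contra hinf
    rw [Set.not_infinite] at hinf
    set s : Set X := {b : X | red b = false ∧ (R a b ↔ p)} with hs
    obtain ⟨b0, hb0⟩ := hsne
    have hb0s : b0 ∈ s := hb0
    have hne' : hinf.toFinset.Nonempty := ⟨b0, hinf.mem_toFinset.mpr hb0s⟩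
    set b : X := hinf.toFinset.max' hne' with hbdef
    have hbs : b ∈ s := hinf.mem_toFinset.mp (hinf.toFinset.max'_mem hne')
    have hmax : ∀ x ∈ s, x ≤ b := fun x hx =>
      Finset.le_max' _ x (hinf.mem_toFinset.mpr hx)
    have hbblue : red b = false := hbs.1
    -- pick c' blue below b, not in s
    obtain ⟨c', hc'⟩ := ((hblue_lt b hbblue).diff hinf).nonempty
    have hc'blue : red c' = false := hc'.1.1
    have hc'lt : c' < b := hc'.1.2
    have hc'ns : c' ∉ s := hc'.2
    -- pick c blue above b (automatically not in s)
    obtain ⟨c, hc⟩ := (hblue_gt b hbblue).nonempty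
    have hcblue : red c = false := hc.1
    have hcgt : b < c := hc.2
    have hcns : c ∉ s := fun h => absurd (hmax c h) (not_le.mpr hcgt)
    have hc'np : ¬ (R a c' ↔ p) := fun h => hc'ns ⟨hc'blue, h⟩
    have hcnp : ¬ (R a c ↔ p) := fun h => hcns ⟨hcblue, h⟩
    have hRcc : R a c' ↔ R a c := by tauto
    -- the partial isomorphism sending a ↦ a, c' ↦ c
    have hac' : a ≠ c' := fun h => by rw [h, hc'blue] at ha; exact Bool.noConfusion ha
    set f : X → X := fun x => if x = c' then c else x with hf
    have hfa : f a = a := if_neg hac'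
    have hfc' : f c' = c := if_pos rfl
    have haltc' : a < c' := hlt a c' ha hc'blue
    have haltc : a < c := hlt a c ha hcblue
    have hmem : ∀ x ∈ ({a, c'} : Finset X), x = a ∨ x = c' := by
      intro x hx
      simpa using hx
    have hpi : IsPartialIso (· < · : X → X → Prop) red R {a, c'} f := by
      refine ⟨?_, ?_, ?_⟩
      · intro x hx y hy
        rcases hmem x hx with h | h <;> rcases hmem y hy with h' | h' <;> subst h <;> subst h'
        · rw [hfa]
        · rw [hfa, hfc']
          exact iff_of_true haltc' haltc
        · rw [hfa, hfc']
          exact iff_of_false (asymm haltc') (asymm haltc)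
        · rw [hfc']
          exact iff_of_false (lt_irrefl _) (lt_irrefl _)
      · intro x hx
        rcases hmem x hx with h | h <;> subst h
        · rw [hfa]
        · rw [hfc', hcblue, hc'blue]
      · intro x hx y hy
        rcases hmem x hx with h | h <;> rcases hmem y hy with h' | h' <;> subst h <;> subst h'
        · rw [hfa]
        · rw [hfa, hfc']
          exact hRcc
        · rw [hfa, hfc']
          exact ⟨fun h => hSymm _ _ (hRcc.mp (hSymm _ _ h)),
                 fun h => hSymm _ _ (hRcc.mpr (hSymm _ _ h))⟩
        · rw [hfc']
          exact iff_of_false (hIrr _) (hIrr _)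
    obtain ⟨g, hg, hfix⟩ := hHom {a, c'} f hpi
    have hga : g a = a := by
      rw [hfix a (by simp), hfa]
    have hgc' : g c' = c := by
      rw [hfix c' (by simp), hfc']
    -- g maps s into s
    have hgs : ∀ x ∈ s, g x ∈ s := by
      intro x hx
      have h := hg.2.2 a x
      rw [hga] at h
      exact ⟨(hg.2.1 x).trans hx.1, h.symm.trans hx.2⟩
    have hginvs : ∀ x ∈ s, g.symm x ∈ s := by
      intro x hx
      have hred : red (g.symm x) = red x := by
        have h := hg.2.1 (g.symm x)
        rw [g.apply_symm_apply] at h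
        exact h.symm
      have h := hg.2.2 a (g.symm x)
      rw [hga] at h
      rw [g.apply_symm_apply] at h
      exact ⟨hred.trans hx.1, h.trans hx.2⟩
    -- g fixes the maximum b of s
    have hmono : ∀ x y : X, x ≤ y → g x ≤ g y := by
      intro x y hxy
      rcases lt_or_eq_of_le hxy with h | h
      · exact le_of_lt ((hg.1 x y).mp h)
      · rw [h]
    have hgb : g b = b := by
      have h1 : g b ≤ b := hmax _ (hgs b hbs)
      have h2 : g.symm b ≤ b := hmax _ (hginvs b hbs)
      have h3 : b ≤ g b := by
        have := hmono _ _ h2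
        rwa [g.apply_symm_apply] at this
      exact le_antisymm h1 h3
    -- contradiction: c' < b but g c' = c > b
    have : g c' < g b := (hg.1 c' b).mp hc'lt
    rw [hgc', hgb] at this
    exact absurd this (not_lt.mpr (le_of_lt hcgt))
  constructor
  · have h := core True (by obtain ⟨b, hb1, hb2⟩ := hFne; exact ⟨b, hb1, iff_of_true hb2 trivial⟩)
    have heq : {b : X | red b = false ∧ (R a b ↔ True)} = {b : X | red b = false ∧ R a b} := by
      ext x; simp
    rwa [heq] at h
  · have h := core False
      (by obtain ⟨b, hb1, hb2⟩ := hCne; exact ⟨b, hb1, iff_of_false hb2 not_false⟩)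
    have heq : {b : X | red b = false ∧ (R a b ↔ False)} = {b : X | red b = false ∧ ¬ R a b} := by
      ext x; simp
    rwa [heq] at h
end

section
/- Let (X, <, R) be a countable homogeneous ordered bipartite graph in which every red point precedes every blue point and both colour classes X_r and X_b are order-isomorphic to ℚ. If for some red point a there exist blue points b₁ < b₂ < b₃ with R(a,b₁), ¬R(a,b₂), R(a,b₃), or with ¬R(a,b₁), R(a,b₂), ¬R(a,b₃), then both R(a) and its complement X_b \ R(a) are dense subsets of X_b (i.e., between any two blue points there is a blue neighbour of a and a blue non-neighbour of a). -/
/-- In case (iv), if for some red point `a` the neighbour set alternates (there are blue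
`b₁ < b₂ < b₃` with `R a b₁, ¬R a b₂, R a b₃` or with `¬R a b₁, R a b₂, ¬R a b₃`), then
both `R(a)` and its complement are dense in the blue class. -/
theorem stmt8 {X : Type*} [LinearOrder X] [Countable X]
    (red : X → Bool) (R : X → X → Prop)
    (hSymm : ∀ x y, R x y → R y x) (hIrr : ∀ x, ¬ R x x)
    (hBip : ∀ x y, R x y → red x ≠ red y)
    (hHom : Homogeneous (· < · : X → X → Prop) red R)
    (hlt : ∀ x y, red x = true → red y = false → x < y)
    (hQr : Nonempty ({x : X // red x = true} ≃o ℚ))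
    (hQb : Nonempty ({x : X // red x = false} ≃o ℚ))
    (a : X) (ha : red a = true)
    (halt : ∃ b₁ b₂ b₃ : X, red b₁ = false ∧ red b₂ = false ∧ red b₃ = false ∧
      b₁ < b₂ ∧ b₂ < b₃ ∧
      ((R a b₁ ∧ ¬ R a b₂ ∧ R a b₃) ∨ (¬ R a b₁ ∧ R a b₂ ∧ ¬ R a b₃))) :
    ∀ b b' : X, red b = false → red b' = false → b < b' →
      (∃ c, red c = false ∧ b < c ∧ c < b' ∧ R a c) ∧
      (∃ c, red c = false ∧ b < c ∧ c < b' ∧ ¬ R a c) := by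
  classical
  -- blue points are never related
  have hblue : ∀ x y : X, red x = false → red y = false → ¬ R x y := by
    intro x y hx hy h
    exact hBip x y h (hx.trans hy.symm)
  -- a is below every blue point
  have haB : ∀ x : X, red x = false → a < x := fun x hx => hlt a x ha hx
  -- density of the blue class
  have hdense : ∀ u v : X, red u = false → red v = false → u < v →
      ∃ m : X, red m = false ∧ u < m ∧ m < v := by
    intro u v hu hv huv
    obtain ⟨e⟩ := hQb
    have h1 : e ⟨u, hu⟩ < e ⟨v, hv⟩ := by
      rw [e.lt_iff_lt]
      exact Subtype.mk_lt_mk.mpr huv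
    obtain ⟨q, hq1, hq2⟩ := exists_between h1
    refine ⟨(e.symm q : {x : X // red x = false}), (e.symm q).2, ?_, ?_⟩
    · have : (⟨u, hu⟩ : {x : X // red x = false}) < e.symm q := by
        rw [← e.lt_iff_lt, e.apply_symm_apply]; exact hq1
      exact this
    · have : e.symm q < (⟨v, hv⟩ : {x : X // red x = false}) := by
        rw [← e.lt_iff_lt, e.apply_symm_apply]; exact hq2
      exact this
  -- moving one blue point while fixing a
  have move1 : ∀ p m : X, red p = false → red m = false → (R a p ↔ R a m) →
      ∃ g : X ≃ X, IsAuto (· < · : X → X → Prop) red R g ∧ g a = a ∧ g p = m := by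
    intro p m hp hm hR
    have hap : a ≠ p := by
      intro h; rw [h] at ha; rw [ha] at hp; exact absurd hp (by simp)
    set f : X → X := fun x => if x = a then a else m with hf
    have hfa : f a = a := by simp [hf]
    have hfp : f p = m := by simp [hf, Ne.symm hap]
    have hiso : IsPartialIso (· < · : X → X → Prop) red R {a, p} f := by
      refine ⟨?_, ?_, ?_⟩
      · intro x hx y hy
        simp only [Finset.mem_insert, Finset.mem_singleton] at hx hy
        rcases hx with h | h <;> rcases hy with h' | h' <;> rw [h, h'] <;>
          simp [hfa, hfp, haB p hp, haB m hm, not_lt_of_gt (haB p hp),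
            not_lt_of_gt (haB m hm), lt_self_iff_false]
      · intro x hx
        simp only [Finset.mem_insert, Finset.mem_singleton] at hx
        rcases hx with h | h <;> rw [h]
        · rw [hfa]
        · rw [hfp, hm, hp]
      · intro x hx y hy
        simp only [Finset.mem_insert, Finset.mem_singleton] at hx hy
        have hR' : R p a ↔ R m a := ⟨fun h => hSymm _ _ (hR.mp (hSymm _ _ h)),
          fun h => hSymm _ _ (hR.mpr (hSymm _ _ h))⟩
        rcases hx with h | h <;> rcases hy with h' | h' <;> rw [h, h'] <;>
          simp [hfa, hfp, hR, hR', hIrr a, hIrr p, hIrr m]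
      
    obtain ⟨g, hg, hgs⟩ := hHom _ f hiso
    exact ⟨g, hg, (hgs a (by simp)).trans hfa, (hgs p (by simp)).trans hfp⟩
  -- moving two blue points while fixing a
  have move2 : ∀ p q m m' : X, red p = false → red q = false → red m = false →
      red m' = false → p < q → m < m' → (R a p ↔ R a m) → (R a q ↔ R a m') →
      ∃ g : X ≃ X, IsAuto (· < · : X → X → Prop) red R g ∧ g a = a ∧ g p = m ∧ g q = m' := by
    intro p q m m' hp hq hm hm' hpq hmm hR1 hR2
    have hap : a ≠ p := fun h => by rw [h] at ha; rw [ha] at hp; exact absurd hp (by simp)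
    have haq : a ≠ q := fun h => by rw [h] at ha; rw [ha] at hq; exact absurd hq (by simp)
    have hpq' : p ≠ q := ne_of_lt hpq
    set f : X → X := fun x => if x = a then a else if x = p then m else m' with hf
    have hfa : f a = a := by simp [hf]
    have hfp : f p = m := by simp [hf, Ne.symm hap]
    have hfq : f q = m' := by simp [hf, Ne.symm haq, Ne.symm hpq']
    have hiso : IsPartialIso (· < · : X → X → Prop) red R {a, p, q} f := by
      refine ⟨?_, ?_, ?_⟩
      · intro x hx y hy
        simp only [Finset.mem_insert, Finset.mem_singleton] at hx hy
        rcases hx with h | h | h <;> rcases hy with h' | h' | h' <;> rw [h, h'] <;>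
          simp [hfa, hfp, hfq, haB p hp, haB q hq, haB m hm, haB m' hm',
            not_lt_of_gt (haB p hp), not_lt_of_gt (haB q hq), not_lt_of_gt (haB m hm),
            not_lt_of_gt (haB m' hm'), hpq, hmm, not_lt_of_gt hpq, not_lt_of_gt hmm,
            lt_self_iff_false]
      · intro x hx
        simp only [Finset.mem_insert, Finset.mem_singleton] at hx
        rcases hx with h | h | h <;> rw [h]
        · rw [hfa]
        · rw [hfp, hm, hp]
        · rw [hfq, hm', hq]
      · intro x hx y hy
        simp only [Finset.mem_insert, Finset.mem_singleton] at hx hy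
        have hR1' : R p a ↔ R m a := ⟨fun h => hSymm _ _ (hR1.mp (hSymm _ _ h)),
          fun h => hSymm _ _ (hR1.mpr (hSymm _ _ h))⟩
        have hR2' : R q a ↔ R m' a := ⟨fun h => hSymm _ _ (hR2.mp (hSymm _ _ h)),
          fun h => hSymm _ _ (hR2.mpr (hSymm _ _ h))⟩
        rcases hx with h | h | h <;> rcases hy with h' | h' | h' <;> rw [h, h'] <;>
          simp [hfa, hfp, hfq, hR1, hR2, hR1', hR2', hIrr a, hIrr p, hIrr q,
            hIrr m, hIrr m', hblue p q hp hq, hblue m m' hm hm',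
            hblue q p hq hp, hblue m' m hm' hm]
    obtain ⟨g, hg, hgs⟩ := hHom _ f hiso
    exact ⟨g, hg, (hgs a (by simp)).trans hfa, (hgs p (by simp)).trans hfp,
      (hgs q (by simp)).trans hfq⟩
  -- key lemma: transporting a middle point
  have key : ∀ p₁ p₂ p₃ m m' : X, red p₁ = false → red p₂ = false → red p₃ = false →
      red m = false → red m' = false → p₁ < p₂ → p₂ < p₃ → m < m' →
      (R a p₁ ↔ R a m) → (R a p₃ ↔ R a m') →
      ∃ c : X, red c = false ∧ m < c ∧ c < m' ∧ (R a c ↔ R a p₂) := by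
    intro p₁ p₂ p₃ m m' h1 h2 h3 hm hm' h12 h23 hmm hR1 hR3
    obtain ⟨g, hg, hga, hg1, hg3⟩ := move2 p₁ p₃ m m' h1 h3 hm hm' (h12.trans h23) hmm hR1 hR3
    refine ⟨g p₂, by rw [hg.2.1 p₂, h2], ?_, ?_, ?_⟩
    · rw [← hg1]; exact (hg.1 p₁ p₂).mp h12
    · rw [← hg3]; exact (hg.1 p₂ p₃).mp h23
    · have := hg.2.2 a p₂
      rw [hga] at this
      exact this.symm
  -- both alternation patterns exist
  have hpat : (∃ q₁ q₂ q₃ : X, red q₁ = false ∧ red q₂ = false ∧ red q₃ = false ∧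
        q₁ < q₂ ∧ q₂ < q₃ ∧ R a q₁ ∧ ¬ R a q₂ ∧ R a q₃) ∧
      (∃ r₁ r₂ r₃ : X, red r₁ = false ∧ red r₂ = false ∧ red r₃ = false ∧
        r₁ < r₂ ∧ r₂ < r₃ ∧ ¬ R a r₁ ∧ R a r₂ ∧ ¬ R a r₃) := by
    obtain ⟨b₁, b₂, b₃, h1, h2, h3, h12, h23, hcase⟩ := halt
    rcases hcase with ⟨hr1, hr2, hr3⟩ | ⟨hr1, hr2, hr3⟩
    · refine ⟨⟨b₁, b₂, b₃, h1, h2, h3, h12, h23, hr1, hr2, hr3⟩, ?_⟩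
      obtain ⟨g, hg, hga, hgp⟩ := move1 b₁ b₃ h1 h3 (iff_of_true hr1 hr3)
      refine ⟨b₂, b₃, g b₂, h2, h3, by rw [hg.2.1 b₂, h2], h23, ?_, hr2, hr3, ?_⟩
      · rw [← hgp]; exact (hg.1 b₁ b₂).mp h12
      · intro h
        apply hr2
        have := hg.2.2 a b₂
        rw [hga] at this
        exact this.mpr h
    · refine ⟨?_, ⟨b₁, b₂, b₃, h1, h2, h3, h12, h23, hr1, hr2, hr3⟩⟩
      obtain ⟨g, hg, hga, hgp⟩ := move1 b₃ b₁ h3 h1 (iff_of_false hr3 hr1)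
      refine ⟨g b₂, b₁, b₂, by rw [hg.2.1 b₂, h2], h1, h2, ?_, h12, ?_, hr1, hr2⟩
      · rw [← hgp]; exact (hg.1 b₂ b₃).mp h23
      · have := hg.2.2 a b₂
        rw [hga] at this
        exact this.mp hr2
  obtain ⟨⟨q₁, q₂, q₃, hq1, hq2, hq3, hq12, hq23, hQ1, hQ2, hQ3⟩,
    ⟨r₁, r₂, r₃, hr1, hr2, hr3, hr12, hr23, hR1, hR2, hR3⟩⟩ := hpat
  intro b b' hb hb' hbb
  obtain ⟨m₁, hm1, hbm1, hm1b⟩ := hdense b b' hb hb' hbb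
  obtain ⟨m₂, hm2, hm12, hm2b⟩ := hdense m₁ b' hm1 hb' hm1b
  constructor
  · -- a neighbour of a in (b, b')
    by_cases h1 : R a m₁
    · exact ⟨m₁, hm1, hbm1, hm1b, h1⟩
    · by_cases h2 : R a m₂
      · exact ⟨m₂, hm2, hbm1.trans hm12, hm2b, h2⟩
      · obtain ⟨c, hc, hc1, hc2, hcR⟩ := key r₁ r₂ r₃ m₁ m₂ hr1 hr2 hr3 hm1 hm2
          hr12 hr23 hm12 (iff_of_false hR1 h1) (iff_of_false hR3 h2)
        exact ⟨c, hc, hbm1.trans hc1, hc2.trans hm2b, hcR.mpr hR2⟩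
  · -- a non-neighbour of a in (b, b')
    by_cases h1 : R a m₁
    · by_cases h2 : R a m₂
      · obtain ⟨c, hc, hc1, hc2, hcR⟩ := key q₁ q₂ q₃ m₁ m₂ hq1 hq2 hq3 hm1 hm2
          hq12 hq23 hm12 (iff_of_true hQ1 h1) (iff_of_true hQ3 h2)
        exact ⟨c, hc, hbm1.trans hc1, hc2.trans hm2b, fun h => hQ2 (hcR.mp h)⟩
      · exact ⟨m₂, hm2, hbm1.trans hm12, hm2b, h2⟩
    · exact ⟨m₁, hm1, hbm1, hm1b, h1⟩
end

section
/- Let (X, <, R) be a countable homogeneous ordered bipartite graph in which every red point precedes every blue point, both colour classes X_r and X_b are order-isomorphic to ℚ, and R is neither empty nor complete. Suppose a is a red point for which there do not exist blue points b₁ < b₂ < b₃ with R(a,b₁), ¬R(a,b₂), R(a,b₃) nor with ¬R(a,b₁), R(a,b₂), ¬R(a,b₃), so that R(a) is a proper nonempty initial or final segment of X_b. Then the cut determined by R(a) is irrational: if R(a) is an initial segment then R(a) has no greatest element and its complement has no least element; if R(a) is a final segment then R(a) has no least element and its complement has no greatest element. -/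
/-- Auxiliary: extend the partial iso fixing `a` and sending blue `c` to blue `b`
(possible when `R a c ↔ R a b`) to an automorphism. -/
lemma exists_auto_fix_send {X : Type*} [LinearOrder X]
    (red : X → Bool) (R : X → X → Prop)
    (hSymm : ∀ x y, R x y → R y x) (hIrr : ∀ x, ¬ R x x)
    (hHom : Homogeneous (· < · : X → X → Prop) red R)
    (hlt : ∀ x y, red x = true → red y = false → x < y)
    (a b c : X) (ha : red a = true) (hb : red b = false) (hc : red c = false)
    (hR : R a c ↔ R a b) :
    ∃ g : X ≃ X, IsAuto (· < · : X → X → Prop) red R g ∧ g a = a ∧ g c = b := by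
  have hac : a ≠ c := fun h => by rw [h, hc] at ha; exact Bool.noConfusion ha
  set f : X → X := fun x => if x = c then b else x with hf
  have hfa : f a = a := by simp [hf, hac]
  have hfc : f c = b := by simp [hf]
  have hmem : ∀ x ∈ ({a, c} : Finset X), x = a ∨ x = c := by
    intro x hx; simpa using hx
  have hpi : IsPartialIso (· < · : X → X → Prop) red R ({a, c} : Finset X) f := by
    refine ⟨?_, ?_, ?_⟩
    · intro x hx y hy
      rcases hmem x hx with rfl | rfl <;> rcases hmem y hy with rfl | rfl <;>
        simp [hfa, hfc]
      · exact iff_of_true (hlt _ _ ha hc) (hlt _ _ ha hb)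
      · exact iff_of_false (not_lt.mpr (hlt _ _ ha hc).le)
          (not_lt.mpr (hlt _ _ ha hb).le)
    · intro x hx
      rcases hmem x hx with rfl | rfl <;> simp [hfa, hfc, hb, hc]
    · intro x hx y hy
      rcases hmem x hx with rfl | rfl <;> rcases hmem y hy with rfl | rfl <;>
        simp [hfa, hfc]
      · exact hR
      · exact ⟨fun h => hSymm _ _ (hR.mp (hSymm _ _ h)),
          fun h => hSymm _ _ (hR.mpr (hSymm _ _ h))⟩
      · exact ⟨fun h => absurd h (hIrr _), fun h => absurd h (hIrr _)⟩
  obtain ⟨g, hg, hgf⟩ := hHom _ f hpi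
  refine ⟨g, hg, ?_, ?_⟩
  · rw [hgf a (by simp), hfa]
  · rw [hgf c (by simp), hfc]

/-- In case (iv), with `R` neither empty nor complete, suppose the red point `a` has no
alternating triple of blue points, so that `R(a)` is a proper nonempty initial or final
segment of the blue class.  Then the cut determined by `R(a)` is irrational: if `R(a)`
is an initial segment it has no greatest element and its complement has no least
element; if it is a final segment it has no least element and its complement has no
greatest element. -/
theorem stmt9 {X : Type*} [LinearOrder X] [Countable X]
    (red : X → Bool) (R : X → X → Prop)
    (hSymm : ∀ x y, R x y → R y x) (hIrr : ∀ x, ¬ R x x)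
    (hBip : ∀ x y, R x y → red x ≠ red y)
    (hHom : Homogeneous (· < · : X → X → Prop) red R)
    (hlt : ∀ x y, red x = true → red y = false → x < y)
    (hQr : Nonempty ({x : X // red x = true} ≃o ℚ))
    (hQb : Nonempty ({x : X // red x = false} ≃o ℚ))
    (hne : ∃ x y, R x y)
    (hnc : ∃ x y, red x ≠ red y ∧ ¬ R x y)
    (a : X) (ha : red a = true)
    (hnoalt : ¬ ∃ b₁ b₂ b₃ : X, red b₁ = false ∧ red b₂ = false ∧ red b₃ = false ∧
      b₁ < b₂ ∧ b₂ < b₃ ∧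
      ((R a b₁ ∧ ¬ R a b₂ ∧ R a b₃) ∨ (¬ R a b₁ ∧ R a b₂ ∧ ¬ R a b₃))) :
    -- if R(a) is an initial segment of the blue class:
    ((∀ b c : X, red b = false → red c = false → b < c → R a c → R a b) →
      (¬ ∃ b : X, red b = false ∧ R a b ∧ ∀ b', red b' = false → R a b' → b' ≤ b) ∧
      (¬ ∃ b : X, red b = false ∧ ¬ R a b ∧ ∀ b', red b' = false → ¬ R a b' → b ≤ b')) ∧
    -- if R(a) is a final segment of the blue class:
    ((∀ b c : X, red b = false → red c = false → b < c → R a b → R a c) →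
      (¬ ∃ b : X, red b = false ∧ R a b ∧ ∀ b', red b' = false → R a b' → b ≤ b') ∧
      (¬ ∃ b : X, red b = false ∧ ¬ R a b ∧ ∀ b', red b' = false → ¬ R a b' → b' ≤ b)) := by
  
  obtain ⟨e⟩ := hQb
  -- for any blue point there is a smaller and a larger blue point
  have below : ∀ b : X, red b = false → ∃ c : X, red c = false ∧ c < b := by
    intro b hb
    refine ⟨(e.symm (e ⟨b, hb⟩ - 1)).val, (e.symm (e ⟨b, hb⟩ - 1)).prop, ?_⟩
    have : e.symm (e ⟨b, hb⟩ - 1) < ⟨b, hb⟩ := by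
      rw [← e.lt_iff_lt, OrderIso.apply_symm_apply]; linarith
    exact_mod_cast this
  have above : ∀ b : X, red b = false → ∃ c : X, red c = false ∧ b < c := by
    intro b hb
    refine ⟨(e.symm (e ⟨b, hb⟩ + 1)).val, (e.symm (e ⟨b, hb⟩ + 1)).prop, ?_⟩
    have : ⟨b, hb⟩ < e.symm (e ⟨b, hb⟩ + 1) := by
      rw [← e.lt_iff_lt, OrderIso.apply_symm_apply]; linarith
    exact_mod_cast this
  constructor
  · intro hinit
    constructor
    · rintro ⟨b, hb, hRab, hmax⟩
      obtain ⟨c, hc, hcb⟩ := below b hb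
      have hRac : R a c := hinit c b hc hb hcb hRab
      obtain ⟨g, ⟨hglt, hgred, hgR⟩, hga, hgc⟩ :=
        exists_auto_fix_send red R hSymm hIrr hHom hlt a b c ha hb hc
          (iff_of_true hRac hRab)
      have h1 : b < g b := by have := (hglt c b).mp hcb; rwa [hgc] at this
      have h2 : R a (g b) := by have := (hgR a b).mp hRab; rwa [hga] at this
      exact absurd (hmax (g b) (hgred b ▸ hb) h2) (not_le.mpr h1)
    · rintro ⟨b, hb, hRab, hmin⟩
      obtain ⟨c, hc, hbc⟩ := above b hb
      have hRac : ¬ R a c := fun h => hRab (hinit b c hb hc hbc h)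
      obtain ⟨g, ⟨hglt, hgred, hgR⟩, hga, hgc⟩ :=
        exists_auto_fix_send red R hSymm hIrr hHom hlt a b c ha hb hc
          (iff_of_false hRac hRab)
      have h1 : g b < b := by have := (hglt b c).mp hbc; rwa [hgc] at this
      have h2 : ¬ R a (g b) := fun h => hRab ((hgR a b).mpr (by rwa [hga]))
      exact absurd (hmin (g b) (hgred b ▸ hb) h2) (not_le.mpr h1)
  · intro hfin
    constructor
    · rintro ⟨b, hb, hRab, hmin⟩
      obtain ⟨c, hc, hbc⟩ := above b hb
      have hRac : R a c := hfin b c hb hc hbc hRab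
      obtain ⟨g, ⟨hglt, hgred, hgR⟩, hga, hgc⟩ :=
        exists_auto_fix_send red R hSymm hIrr hHom hlt a b c ha hb hc
          (iff_of_true hRac hRab)
      have h1 : g b < b := by have := (hglt b c).mp hbc; rwa [hgc] at this
      have h2 : R a (g b) := by have := (hgR a b).mp hRab; rwa [hga] at this
      exact absurd (hmin (g b) (hgred b ▸ hb) h2) (not_le.mpr h1)
    · rintro ⟨b, hb, hRab, hmax⟩
      obtain ⟨c, hc, hcb⟩ := below b hb
      have hRac : ¬ R a c := fun h => hRab (hfin c b hc hb hcb h)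
      obtain ⟨g, ⟨hglt, hgred, hgR⟩, hga, hgc⟩ :=
        exists_auto_fix_send red R hSymm hIrr hHom hlt a b c ha hb hc
          (iff_of_false hRac hRab)
      have h1 : b < g b := by have := (hglt c b).mp hcb; rwa [hgc] at this
      have h2 : ¬ R a (g b) := fun h => hRab ((hgR a b).mpr (by rwa [hga]))
      exact absurd (hmax (g b) (hgred b ▸ hb) h2) (not_le.mpr h1)
end

section
/- Let (X, <, R) be a countable homogeneous ordered bipartite graph in which every red point precedes every blue point, both colour classes are order-isomorphic to ℚ, and identify X_b with ℚ. Suppose that for each red point a there is a real number f(a) such that R(a) = {b ∈ X_b : b > f(a)}. Then the map f : X_r → ℝ is injective, and its image is dense in ℝ and unbounded above and below. -/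
private lemma real_eq_of_cuts {x y : ℝ} (h : ∀ q : ℚ, x < (q:ℝ) ↔ y < (q:ℝ)) : x = y := by
  by_contra hne
  rcases lt_or_gt_of_ne hne with hlt | hlt
  · obtain ⟨q, hq1, hq2⟩ := exists_rat_btwn hlt
    exact absurd ((h q).mp hq1) (not_lt.mpr hq2.le)
  · obtain ⟨q, hq1, hq2⟩ := exists_rat_btwn hlt
    exact absurd ((h q).mpr hq1) (not_lt.mpr hq2.le)

private lemma pair_iso {X : Type*} [LinearOrder X] (red : X → Bool) (R : X → X → Prop)
    (hIrr : ∀ x, ¬ R x x) (hBip : ∀ x y, R x y → red x ≠ red y)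
    (x y u v : X) (hxy : x < y) (huv : u < v)
    (hcu : red u = red x) (hcv : red v = red y) (hc : red x = red y) :
    IsPartialIso (· < · : X → X → Prop) red R {x, y}
      (fun z => if z = x then u else if z = y then v else z) := by
  have hne : x ≠ y := hxy.ne
  have hfx : (if x = x then u else if x = y then v else x) = u := by simp
  have hfy : (if y = x then u else if y = y then v else y) = v := by simp [hne.symm]
  have hmem : ∀ z ∈ ({x, y} : Finset X), z = x ∨ z = y := by
    intro z hz; simpa using hz
  have hcuv : red u = red v := by rw [hcu, hc, hcv]
  have hnR : ∀ a b : X, red a = red b → ¬ R a b := fun a b hab hR => (hBip a b hR) hab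
  refine ⟨?_, ?_, ?_⟩
  · intro a ha b hb
    rcases hmem a ha with rfl | rfl <;> rcases hmem b hb with rfl | rfl
    · simp
    · simpa [hne, Ne.symm hne] using iff_of_true hxy huv
    · simpa [hne, Ne.symm hne] using iff_of_false (asymm hxy) (asymm huv)
    · simp [hne, Ne.symm hne]
  · intro a ha
    rcases hmem a ha with rfl | rfl
    · simpa using hcu
    · simpa [hne, Ne.symm hne] using hcv
  · intro a ha b hb
    rcases hmem a ha with rfl | rfl <;> rcases hmem b hb with rfl | rfl
    · simpa using iff_of_false (hIrr _) (hIrr _)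
    · simpa [hne, Ne.symm hne] using iff_of_false (hnR _ _ hc) (hnR _ _ hcuv)
    · simpa [hne, Ne.symm hne] using iff_of_false (hnR _ _ hc.symm) (hnR _ _ hcuv.symm)
    · simpa [hne, Ne.symm hne] using iff_of_false (hIrr _) (hIrr _)

/-- In case (iv), identifying the blue class with ℚ via `e`, if each red point `a` has a
real `f a` with `R(a) = {b blue : b > f a}`, then `f` is injective and its image is
dense in ℝ and unbounded above and below. -/
theorem stmt10 {X : Type*} [LinearOrder X] [Countable X]
    (red : X → Bool) (R : X → X → Prop)
    (hSymm : ∀ x y, R x y → R y x) (hIrr : ∀ x, ¬ R x x)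
    (hBip : ∀ x y, R x y → red x ≠ red y)
    (hHom : Homogeneous (· < · : X → X → Prop) red R)
    (hlt : ∀ x y, red x = true → red y = false → x < y)
    (hQr : Nonempty ({x : X // red x = true} ≃o ℚ))
    (e : {x : X // red x = false} ≃o ℚ)
    (f : {x : X // red x = true} → ℝ)
    (hf : ∀ (a : {x : X // red x = true}) (b : {x : X // red x = false}),
      R a.1 b.1 ↔ f a < (e b : ℝ)) :
    Function.Injective f ∧
    (∀ r s : ℝ, r < s → ∃ a : {x : X // red x = true}, r < f a ∧ f a < s) ∧
    (∀ r : ℝ, ∃ a : {x : X // red x = true}, r < f a) ∧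
    (∀ r : ℝ, ∃ a : {x : X // red x = true}, f a < r) := by
  classical
  -- blue points indexed by rationals
  let blue : ℚ → X := fun q => ((e.symm q : {x : X // red x = false}) : X)
  have hblue_red : ∀ q, red (blue q) = false := fun q => (e.symm q).2
  have hblue_e : ∀ q, (e ⟨blue q, hblue_red q⟩ : ℚ) = q := by
    intro q
    have : (⟨blue q, hblue_red q⟩ : {x : X // red x = false}) = e.symm q := rfl
    rw [this, e.apply_symm_apply]
  have hblue_lt : ∀ q p : ℚ, q < p → blue q < blue p := by
    intro q p h
    exact Subtype.coe_lt_coe.mpr ((OrderIso.lt_iff_lt e.symm).mpr h)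
  -- key existence lemma
  have key : ∀ q p : ℚ, q < p →
      ∃ a : {x : X // red x = true}, (q:ℝ) ≤ f a ∧ f a < (p:ℝ) := by
    intro q p hqp
    obtain ⟨eR⟩ := hQr
    set a0 := eR.symm 0 with ha0
    obtain ⟨q0, hq0⟩ := exists_rat_lt (f a0)
    obtain ⟨q1, hq1⟩ := exists_rat_gt (f a0)
    have hq01 : q0 < q1 := by exact_mod_cast hq0.trans hq1
    have hiso := pair_iso red R hIrr hBip (blue q0) (blue q1) (blue q) (blue p)
      (hblue_lt _ _ hq01) (hblue_lt _ _ hqp)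
      (by rw [hblue_red, hblue_red]) (by rw [hblue_red, hblue_red])
      (by rw [hblue_red, hblue_red])
    obtain ⟨g, ⟨hgl, hgc, hgR⟩, hgs⟩ := hHom _ _ hiso
    have hne10 : blue q1 ≠ blue q0 := (hblue_lt _ _ hq01).ne'
    have hgb0 : g (blue q0) = blue q := by
      simpa using hgs (blue q0) (by simp)
    have hgb1 : g (blue q1) = blue p := by
      simpa [hne10] using hgs (blue q1) (by simp)
    have hared : red (g (a0 : X)) = true := by rw [hgc]; exact a0.2
    refine ⟨⟨g (a0 : X), hared⟩, ?_, ?_⟩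
    · have h1 : ¬ R (a0 : X) (blue q0) := by
        rw [hf a0 ⟨blue q0, hblue_red q0⟩, hblue_e]
        exact not_lt.mpr hq0.le
      have h2 : ¬ R (g (a0 : X)) (blue q) := by
        rw [← hgb0, ← hgR]; exact h1
      rw [hf ⟨g (a0 : X), hared⟩ ⟨blue q, hblue_red q⟩, hblue_e] at h2
      exact not_lt.mp h2
    · have h1 : R (a0 : X) (blue q1) := by
        rw [hf a0 ⟨blue q1, hblue_red q1⟩, hblue_e]
        exact hq1
      have h2 : R (g (a0 : X)) (blue p) := by
        rw [← hgb1, ← hgR]; exact h1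
      rwa [hf ⟨g (a0 : X), hared⟩ ⟨blue p, hblue_red p⟩, hblue_e] at h2
  -- main transfer lemma for injectivity
  have main : ∀ x y u v : {x : X // red x = true}, (x:X) < y → (u:X) < v →
      f x = f y → f u = f v := by
    intro x y u v hxy huv hfeq
    have hiso := pair_iso red R hIrr hBip (x : X) (y : X) (u : X) (v : X) hxy huv
      (by rw [u.2, x.2]) (by rw [v.2, y.2]) (by rw [x.2, y.2])
    obtain ⟨g, ⟨hgl, hgc, hgR⟩, hgs⟩ := hHom _ _ hiso
    have hneyx : (y:X) ≠ (x:X) := hxy.ne'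
    have hgx : g (x:X) = u := by simpa using hgs (x:X) (by simp)
    have hgy : g (y:X) = v := by simpa [hneyx] using hgs (y:X) (by simp)
    apply real_eq_of_cuts
    intro q
    set b := g.symm (blue q) with hb
    have hbred : red b = false := by
      have h := hgc (g.symm (blue q))
      rw [g.apply_symm_apply] at h
      rw [hb, ← h]
      exact hblue_red q
    have hxu : R (x:X) b ↔ R (u:X) (blue q) := by
      rw [hgR (x:X) b, hgx, hb, g.apply_symm_apply]
    have hyv : R (y:X) b ↔ R (v:X) (blue q) := by
      rw [hgR (y:X) b, hgy, hb, g.apply_symm_apply]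
    have hA : R (x:X) b ↔ f x < (e ⟨b, hbred⟩ : ℝ) := hf x ⟨b, hbred⟩
    have hC : R (y:X) b ↔ f y < (e ⟨b, hbred⟩ : ℝ) := hf y ⟨b, hbred⟩
    have hB : R (u:X) (blue q) ↔ f u < (q:ℝ) := by
      rw [hf u ⟨blue q, hblue_red q⟩, hblue_e]
    have hD : R (v:X) (blue q) ↔ f v < (q:ℝ) := by
      rw [hf v ⟨blue q, hblue_red q⟩, hblue_e]
    calc f u < (q:ℝ) ↔ f x < (e ⟨b, hbred⟩ : ℝ) := by rw [← hB, ← hxu, hA]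
      _ ↔ f y < (e ⟨b, hbred⟩ : ℝ) := by rw [hfeq]
      _ ↔ f v < (q:ℝ) := by rw [← hD, ← hyv, hC]
  refine ⟨?_, ?_, ?_, ?_⟩
  · -- injectivity
    intro a a' heq
    by_contra hne
    obtain ⟨u, hu1, hu2⟩ := key 0 1 (by norm_num)
    obtain ⟨v, hv1, hv2⟩ := key 2 3 (by norm_num)
    have hfuv : f u ≠ f v := by
      have h1 : f u < (1:ℝ) := by exact_mod_cast hu2
      have h2 : (2:ℝ) ≤ f v := by exact_mod_cast hv1
      linarith
    have hne' : (a : X) ≠ (a' : X) := fun h => hne (Subtype.ext h)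
    have huv' : (u : X) ≠ (v : X) := fun h => hfuv (congrArg f (Subtype.ext h))
    rcases hne'.lt_or_gt with h | h <;> rcases huv'.lt_or_gt with h' | h'
    · exact hfuv (main a a' u v h h' heq)
    · exact hfuv (main a a' v u h h' heq).symm
    · exact hfuv (main a' a u v h h' heq.symm)
    · exact hfuv (main a' a v u h h' heq.symm).symm
  · -- density
    intro r s hrs
    obtain ⟨q, hq1, hq2⟩ := exists_rat_btwn hrs
    obtain ⟨p, hp1, hp2⟩ := exists_rat_btwn hq2
    have hqp : q < p := by exact_mod_cast hp1
    obtain ⟨a, ha1, ha2⟩ := key q p hqp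
    exact ⟨a, lt_of_lt_of_le hq1 ha1, ha2.trans hp2⟩
  · -- unbounded above
    intro r
    obtain ⟨q, hq⟩ := exists_rat_gt r
    obtain ⟨a, ha1, _⟩ := key q (q + 1) (by linarith)
    exact ⟨a, lt_of_lt_of_le hq ha1⟩
  · -- unbounded below
    intro r
    obtain ⟨p, hp⟩ := exists_rat_lt r
    obtain ⟨a, _, ha2⟩ := key (p - 1) p (by linarith)
    exact ⟨a, ha2.trans hp⟩
end

section
/- Let (X, <, R) be a countable homogeneous ordered bipartite graph in which every red point precedes every blue point, both colour classes are order-isomorphic to ℚ, and identify X_b with ℚ. Suppose that for each red point a there is a real number f(a) such that R(a) = {b ∈ X_b : b > f(a)}. Then f is either order-preserving (a₁ < a₂ implies f(a₁) < f(a₂) for all red a₁, a₂) or order-reversing (a₁ < a₂ implies f(a₁) > f(a₂) for all red a₁, a₂). -/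
/-- In case (iv), identifying the blue class with ℚ via `e`, if each red point `a` has a
real `f a` with `R(a) = {b blue : b > f a}`, then `f` is strictly order-preserving or
strictly order-reversing. -/
theorem stmt11 {X : Type*} [LinearOrder X] [Countable X]
    (red : X → Bool) (R : X → X → Prop)
    (hSymm : ∀ x y, R x y → R y x) (hIrr : ∀ x, ¬ R x x)
    (hBip : ∀ x y, R x y → red x ≠ red y)
    (hHom : Homogeneous (· < · : X → X → Prop) red R)
    (hlt : ∀ x y, red x = true → red y = false → x < y)
    (hQr : Nonempty ({x : X // red x = true} ≃o ℚ))
    (e : {x : X // red x = false} ≃o ℚ)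
    (f : {x : X // red x = true} → ℝ)
    (hf : ∀ (a : {x : X // red x = true}) (b : {x : X // red x = false}),
      R a.1 b.1 ↔ f a < (e b : ℝ)) :
    StrictMono f ∨ StrictAnti f := by
  classical
  have hRred : ∀ u v : X, red u = true → red v = true → ¬ R u v := by
    intro u v hu hv hr
    exact hBip u v hr (hu.trans hv.symm)
  -- an automorphism mapping any red pair to any other red pair
  have hauto : ∀ a₁ a₂ a₃ a₄ : {x : X // red x = true}, a₁ < a₂ → a₃ < a₄ →
      ∃ g : X ≃ X, IsAuto (· < · : X → X → Prop) red R g ∧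
        g a₁.1 = a₃.1 ∧ g a₂.1 = a₄.1 := by
    intro a₁ a₂ a₃ a₄ h12 h34
    have hne : a₁.1 ≠ a₂.1 := ne_of_lt (Subtype.coe_lt_coe.mpr h12)
    have h12' : a₁.1 < a₂.1 := Subtype.coe_lt_coe.mpr h12
    have h34' : a₃.1 < a₄.1 := Subtype.coe_lt_coe.mpr h34
    have hiso : IsPartialIso (· < · : X → X → Prop) red R {a₁.1, a₂.1}
        (fun x => if x = a₁.1 then a₃.1 else a₄.1) := by
      refine ⟨?_, ?_, ?_⟩
      · intro x hx y hy
        simp only [Finset.mem_insert, Finset.mem_singleton] at hx hy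
        rcases hx with rfl | rfl <;> rcases hy with rfl | rfl <;>
          simp [hne, hne.symm, h12', h34', le_of_lt, not_lt.mpr (le_of_lt h12'),
            not_lt.mpr (le_of_lt h34')]
      · intro x hx
        simp only [Finset.mem_insert, Finset.mem_singleton] at hx
        rcases hx with rfl | rfl <;> simp [hne, hne.symm, a₁.2, a₂.2, a₃.2, a₄.2]
      · intro x hx y hy
        simp only [Finset.mem_insert, Finset.mem_singleton] at hx hy
        have hx' : red x = true := by rcases hx with rfl | rfl; exacts [a₁.2, a₂.2]
        have hy' : red y = true := by rcases hy with rfl | rfl; exacts [a₁.2, a₂.2]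
        have hfx : red (if x = a₁.1 then a₃.1 else a₄.1) = true := by
          split <;> [exact a₃.2; exact a₄.2]
        have hfy : red (if y = a₁.1 then a₃.1 else a₄.1) = true := by
          split <;> [exact a₃.2; exact a₄.2]
        constructor
        · intro h; exact absurd h (hRred _ _ hx' hy')
        · intro h; exact absurd h (hRred _ _ hfx hfy)
    obtain ⟨g, hg, hmap⟩ := hHom _ _ hiso
    refine ⟨g, hg, ?_, ?_⟩
    · have := hmap a₁.1 (by simp)
      simpa using this
    · have := hmap a₂.1 (by simp)
      simpa [hne.symm] using this
  have key : ∀ a₁ a₂ a₃ a₄ : {x : X // red x = true}, a₁ < a₂ → a₃ < a₄ →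
      f a₁ < f a₂ → f a₃ < f a₄ := by
    intro a₁ a₂ a₃ a₄ h12 h34 hlt'
    obtain ⟨g, hg, hm₁, hm₂⟩ := hauto a₁ a₂ a₃ a₄ h12 h34
    obtain ⟨q, hq1, hq2⟩ := exists_rat_btwn hlt'
    set b : {x : X // red x = false} := e.symm q with hb
    have heb : ((e b : ℚ) : ℝ) = (q : ℝ) := by simp [hb]
    set b' : {x : X // red x = false} := ⟨g b.1, by rw [hg.2.1]; exact b.2⟩ with hb'
    have hR1 : R a₁.1 b.1 := (hf a₁ b).mpr (by rw [heb]; exact hq1)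
    have hR1' : R a₃.1 b'.1 := by
      have := (hg.2.2 a₁.1 b.1).mp hR1
      rwa [hm₁] at this
    have h3 : f a₃ < (e b' : ℝ) := (hf a₃ b').mp hR1'
    have hR2 : ¬ R a₂.1 b.1 := by
      intro h
      have := (hf a₂ b).mp h
      rw [heb] at this
      exact absurd this (not_lt.mpr hq2.le)
    have hR2' : ¬ R a₄.1 b'.1 := by
      intro h
      apply hR2
      apply (hg.2.2 a₂.1 b.1).mpr
      rwa [hm₂]
    have h4 : (e b' : ℝ) ≤ f a₄ := not_lt.mp (fun h => hR2' ((hf a₄ b').mpr h))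
    exact h3.trans_le h4
  have key' : ∀ a₁ a₂ a₃ a₄ : {x : X // red x = true}, a₁ < a₂ → a₃ < a₄ →
      f a₂ < f a₁ → f a₄ < f a₃ := by
    intro a₁ a₂ a₃ a₄ h12 h34 hlt'
    obtain ⟨g, hg, hm₁, hm₂⟩ := hauto a₁ a₂ a₃ a₄ h12 h34
    obtain ⟨q, hq1, hq2⟩ := exists_rat_btwn hlt'
    set b : {x : X // red x = false} := e.symm q with hb
    have heb : ((e b : ℚ) : ℝ) = (q : ℝ) := by simp [hb]
    set b' : {x : X // red x = false} := ⟨g b.1, by rw [hg.2.1]; exact b.2⟩ with hb'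
    have hR2 : R a₂.1 b.1 := (hf a₂ b).mpr (by rw [heb]; exact hq1)
    have hR2' : R a₄.1 b'.1 := by
      have := (hg.2.2 a₂.1 b.1).mp hR2
      rwa [hm₂] at this
    have h4 : f a₄ < (e b' : ℝ) := (hf a₄ b').mp hR2'
    have hR1 : ¬ R a₁.1 b.1 := by
      intro h
      have := (hf a₁ b).mp h
      rw [heb] at this
      exact absurd this (not_lt.mpr hq2.le)
    have hR1' : ¬ R a₃.1 b'.1 := by
      intro h
      apply hR1
      apply (hg.2.2 a₁.1 b.1).mpr
      rwa [hm₁]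
    have h3 : (e b' : ℝ) ≤ f a₃ := not_lt.mp (fun h => hR1' ((hf a₃ b').mpr h))
    exact h4.trans_le h3
  -- pick two red points
  obtain ⟨e'⟩ := hQr
  set a₁ := e'.symm 0 with ha₁
  set a₂ := e'.symm 1 with ha₂
  have h12 : a₁ < a₂ := by
    rw [ha₁, ha₂]
    exact e'.symm.strictMono (by norm_num)
  rcases lt_trichotomy (f a₁) (f a₂) with h | h | h
  · left
    intro u v huv
    exact key a₁ a₂ u v h12 huv h
  · -- constant case: contradiction
    exfalso
    have hconst : ∀ u v : {x : X // red x = true}, f u = f v := by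
      intro u v
      rcases lt_trichotomy u v with huv | huv | huv
      · rcases lt_trichotomy (f u) (f v) with h' | h' | h'
        · exact absurd (key u v a₁ a₂ huv h12 h') (by rw [h]; exact lt_irrefl _)
        · exact h'
        · exact absurd (key' u v a₁ a₂ huv h12 h') (by rw [h]; exact lt_irrefl _)
      · rw [huv]
      · rcases lt_trichotomy (f v) (f u) with h' | h' | h'
        · exact absurd (key v u a₁ a₂ huv h12 h') (by rw [h]; exact lt_irrefl _)
        · exact h'.symm
        · exact absurd (key' v u a₁ a₂ huv h12 h') (by rw [h]; exact lt_irrefl _)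
    obtain ⟨q₁, hq₁⟩ := exists_rat_gt (f a₁)
    obtain ⟨q₃, hq₃⟩ := exists_rat_lt (f a₁)
    set b₁ : {x : X // red x = false} := e.symm q₁ with hb₁
    set b₃ : {x : X // red x = false} := e.symm q₃ with hb₃
    have hiso : IsPartialIso (· < · : X → X → Prop) red R {b₁.1} (fun _ => b₃.1) := by
      refine ⟨?_, ?_, ?_⟩
      · intro x hx y hy
        simp only [Finset.mem_singleton] at hx hy
        subst hx; subst hy
        simp
      · intro x hx
        simp only [Finset.mem_singleton] at hx
        subst hx
        rw [b₃.2, b₁.2]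
      · intro x hx y hy
        simp only [Finset.mem_singleton] at hx hy
        subst hx; subst hy
        exact ⟨fun h' => absurd h' (hIrr _), fun h' => absurd h' (hIrr _)⟩
    obtain ⟨g, hg, hmap⟩ := hHom _ _ hiso
    have hR : R a₁.1 b₁.1 := (hf a₁ b₁).mpr (by simp [hb₁]; exact hq₁)
    have hgR : R (g a₁.1) b₃.1 := by
      have := (hg.2.2 a₁.1 b₁.1).mp hR
      rwa [hmap b₁.1 (by simp)] at this
    set u : {x : X // red x = true} := ⟨g a₁.1, by rw [hg.2.1]; exact a₁.2⟩ with hu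
    have h' : f u < ((q₃ : ℚ) : ℝ) := by
      have := (hf u b₃).mp hgR
      simpa [hb₃] using this
    rw [hconst u a₁] at h'
    exact absurd h' (not_lt.mpr hq₃.le)
  · right
    intro u v huv
    exact key' a₁ a₂ u v h12 huv h
end
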